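/- arXiv:1804.09787 — 6 statements merged into one kernel-verified Lean document; each statement's English description precedes it below -/
import Mathlib

section
/- Let X and Y be finite nonempty sets, let u : X → ℝ, v : Y → ℝ, and f : X × Y → ℝ. Then |E_{x,y} f(x,y) u(x) v(y)| ≤ ‖f‖_□ ‖u‖_{L_2} ‖v‖_{L_2}, where the expectations are over uniform x ∈ X and y ∈ Y. -/
open Finset

/-- Fourth power of the box norm of a function on a product of finite sets:
`‖f‖_□^4 = E_{x,x',y,y'} f(x,y) f(x,y') f(x',y) f(x',y')`. -/
noncomputable def boxNormPow4 {X Y : Type*} [Fintype X] [Fintype Y] (f : X → Y → ℝ) : ℝ :=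
  (∑ x : X, ∑ x' : X, ∑ y : Y, ∑ y' : Y, f x y * f x y' * f x' y * f x' y') /
    ((Fintype.card X : ℝ) ^ 2 * (Fintype.card Y : ℝ) ^ 2)

/-- The `L₂` (averaged) norm of a function on a finite set. -/
noncomputable def L2avg {X : Type*} [Fintype X] (u : X → ℝ) : ℝ :=
  Real.sqrt ((∑ x : X, u x ^ 2) / (Fintype.card X : ℝ))


lemma swap3 {A B C : Type*} [Fintype A] [Fintype B] [Fintype C] (F : A → B → C → ℝ) :
    ∑ a : A, ∑ b : B, ∑ c : C, F a b c = ∑ b : B, ∑ c : C, ∑ a : A, F a b c := by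
  rw [Finset.sum_comm]
  exact Finset.sum_congr rfl fun b _ => Finset.sum_comm

lemma swap4 {A B : Type*} [Fintype A] [Fintype B] (F : A → A → B → B → ℝ) :
    ∑ y : B, ∑ y' : B, ∑ x : A, ∑ x' : A, F x x' y y'
      = ∑ x : A, ∑ x' : A, ∑ y : B, ∑ y' : B, F x x' y y' :=
  calc ∑ y : B, ∑ y' : B, ∑ x : A, ∑ x' : A, F x x' y y'
      = ∑ y : B, ∑ x : A, ∑ x' : A, ∑ y' : B, F x x' y y' :=
        Finset.sum_congr rfl fun y _ => swap3 (fun y' x x' => F x x' y y')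
    _ = _ := swap3 (fun y x x' => ∑ y' : B, F x x' y y')

lemma key_ineq {X Y : Type*} [Fintype X] [Fintype Y]
    (u : X → ℝ) (v : Y → ℝ) (f : X → Y → ℝ) :
    (∑ x : X, ∑ y : Y, f x y * u x * v y) ^ 4 ≤
      (∑ x : X, u x ^ 2) ^ 2 * (∑ y : Y, v y ^ 2) ^ 2 *
        (∑ x : X, ∑ x' : X, ∑ y : Y, ∑ y' : Y, f x y * f x y' * f x' y * f x' y') := by
  set g : X → ℝ := fun x => ∑ y : Y, f x y * v y with hg
  have h1 : (∑ x : X, ∑ y : Y, f x y * u x * v y) = ∑ x : X, u x * g x := by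
    refine Finset.sum_congr rfl fun x _ => ?_
    rw [hg, Finset.mul_sum]
    exact Finset.sum_congr rfl fun y _ => by ring
  have cs1 := Finset.sum_mul_sq_le_sq_mul_sq Finset.univ u g
  have h2 : (∑ x : X, g x ^ 2)
      = ∑ p : Y × Y, (v p.1 * v p.2) * (∑ x : X, f x p.1 * f x p.2) := by
    simp only [hg, sq, Finset.mul_sum, Finset.sum_mul, Fintype.sum_prod_type]
    rw [swap3 (fun (x : X) (y : Y) (y' : Y) => f x y' * v y' * (f x y * v y))]
    exact Finset.sum_congr rfl fun y _ => Finset.sum_congr rfl fun y' _ =>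
      Finset.sum_congr rfl fun x _ => by ring
  have cs2 := Finset.sum_mul_sq_le_sq_mul_sq Finset.univ
      (fun p : Y × Y => v p.1 * v p.2) (fun p : Y × Y => ∑ x : X, f x p.1 * f x p.2)
  have h3 : (∑ p : Y × Y, (∑ x : X, f x p.1 * f x p.2) ^ 2)
      = ∑ x : X, ∑ x' : X, ∑ y : Y, ∑ y' : Y, f x y * f x y' * f x' y * f x' y' := by
    simp only [sq, Finset.mul_sum, Finset.sum_mul, Fintype.sum_prod_type]
    rw [swap4 (fun x x' y y' => f x' y * f x' y' * (f x y * f x y'))]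
    refine Finset.sum_congr rfl fun x _ => Finset.sum_congr rfl fun x' _ =>
      Finset.sum_congr rfl fun y _ => Finset.sum_congr rfl fun y' _ => by ring
  have h4 : (∑ p : Y × Y, (v p.1 * v p.2) ^ 2) = (∑ y : Y, v y ^ 2) ^ 2 := by
    simp only [sq, Finset.mul_sum, Finset.sum_mul, Fintype.sum_prod_type]
    exact Finset.sum_congr rfl fun y _ => Finset.sum_congr rfl fun y' _ => by ring
  calc (∑ x : X, ∑ y : Y, f x y * u x * v y) ^ 4
      = ((∑ x : X, u x * g x) ^ 2) ^ 2 := by rw [h1]; ring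
    _ ≤ ((∑ x : X, u x ^ 2) * ∑ x : X, g x ^ 2) ^ 2 :=
        pow_le_pow_left₀ (sq_nonneg _) cs1 2
    _ = (∑ x : X, u x ^ 2) ^ 2 * (∑ x : X, g x ^ 2) ^ 2 := by ring
    _ ≤ (∑ x : X, u x ^ 2) ^ 2 * ((∑ y : Y, v y ^ 2) ^ 2 *
          (∑ x : X, ∑ x' : X, ∑ y : Y, ∑ y' : Y, f x y * f x y' * f x' y * f x' y')) := by
        refine mul_le_mul_of_nonneg_left ?_ (sq_nonneg _)
        rw [h2, ← h4, ← h3]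
        exact cs2
    _ = _ := by ring

theorem stmt5 {X Y : Type*} [Fintype X] [Fintype Y] [Nonempty X] [Nonempty Y]
    (u : X → ℝ) (v : Y → ℝ) (f : X → Y → ℝ) :
    |(∑ x : X, ∑ y : Y, f x y * u x * v y) /
        ((Fintype.card X : ℝ) * (Fintype.card Y : ℝ))| ≤
      boxNormPow4 f ^ ((1 : ℝ) / 4) * L2avg u * L2avg v := by
  set m : ℝ := (Fintype.card X : ℝ) with hm
  set n : ℝ := (Fintype.card Y : ℝ) with hn
  have hm0 : 0 < m := by
    have := Fintype.card_pos (α := X); positivity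
  have hn0 : 0 < n := by
    have := Fintype.card_pos (α := Y); positivity
  set S : ℝ := ∑ x : X, ∑ y : Y, f x y * u x * v y with hS
  set A : ℝ := ∑ x : X, u x ^ 2 with hA
  set B : ℝ := ∑ y : Y, v y ^ 2 with hB
  set T : ℝ := ∑ x : X, ∑ x' : X, ∑ y : Y, ∑ y' : Y, f x y * f x y' * f x' y * f x' y' with hT
  have hA0 : 0 ≤ A := Finset.sum_nonneg fun _ _ => sq_nonneg _
  have hB0 : 0 ≤ B := Finset.sum_nonneg fun _ _ => sq_nonneg _
  have hT0 : 0 ≤ T := by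
    have h3 : (∑ p : Y × Y, (∑ x : X, f x p.1 * f x p.2) ^ 2) = T := by
      simp only [hT, sq, Finset.mul_sum, Finset.sum_mul, Fintype.sum_prod_type]
      rw [swap4 (fun x x' y y' => f x' y * f x' y' * (f x y * f x y'))]
      refine Finset.sum_congr rfl fun x _ => Finset.sum_congr rfl fun x' _ =>
        Finset.sum_congr rfl fun y _ => Finset.sum_congr rfl fun y' _ => by ring
    rw [← h3]
    exact Finset.sum_nonneg fun _ _ => sq_nonneg _
  have hbox : boxNormPow4 f = T / (m ^ 2 * n ^ 2) := rfl
  have hbox0 : 0 ≤ boxNormPow4 f := by rw [hbox]; positivity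
  have hLu : L2avg u = Real.sqrt (A / m) := rfl
  have hLv : L2avg v = Real.sqrt (B / n) := rfl
  have hR0 : 0 ≤ boxNormPow4 f ^ ((1 : ℝ) / 4) * L2avg u * L2avg v := by
    rw [hLu, hLv]
    positivity
  refine le_of_pow_le_pow_left₀ (n := 4) (by norm_num) hR0 ?_
  have hLHS : |S / (m * n)| ^ 4 = S ^ 4 / (m * n) ^ 4 := by
    rw [← abs_pow, div_pow, abs_of_nonneg (by positivity)]
  have hRHS : (boxNormPow4 f ^ ((1 : ℝ) / 4) * L2avg u * L2avg v) ^ 4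
      = (A ^ 2 * B ^ 2 * T) / (m * n) ^ 4 := by
    rw [mul_pow, mul_pow, hLu, hLv,
      show (Real.sqrt (A / m)) ^ 4 = ((Real.sqrt (A / m)) ^ 2) ^ 2 by ring,
      show (Real.sqrt (B / n)) ^ 4 = ((Real.sqrt (B / n)) ^ 2) ^ 2 by ring,
      Real.sq_sqrt (by positivity), Real.sq_sqrt (by positivity)]
    rw [← Real.rpow_natCast (boxNormPow4 f ^ ((1:ℝ)/4)) 4, ← Real.rpow_mul hbox0]
    norm_num
    rw [hbox]
    field_simp
  rw [hLHS, hRHS]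
  exact div_le_div_of_nonneg_right (key_ineq u v f) (by positivity) |>.trans_eq rfl
end

section
/- Let X and Y be finite nonempty sets, let u : X → ℝ, v : Y → ℝ, and f : X × Y → ℝ. Define g : X × X → ℝ by g(x,x') = E_{y ∈ Y} f(x,y) f(x',y). Then |E_{x,y} f(x,y) u(x) v(y)| ≤ ‖g‖_□^{1/2} ‖u‖_{L_2} ‖v‖_{L_2}, where the expectations are over uniform elements. -/
open Finset

theorem stmt6 {X Y : Type*} [Fintype X] [Fintype Y] [Nonempty X] [Nonempty Y]
    (u : X → ℝ) (v : Y → ℝ) (f : X → Y → ℝ)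
    (g : X → X → ℝ)
    (hg : ∀ x x', g x x' = (∑ y : Y, f x y * f x' y) / (Fintype.card Y : ℝ)) :
    |(∑ x : X, ∑ y : Y, f x y * u x * v y) /
        ((Fintype.card X : ℝ) * (Fintype.card Y : ℝ))| ≤
      (boxNormPow4 g ^ ((1 : ℝ) / 4)) ^ ((1 : ℝ) / 2) * L2avg u * L2avg v := by
  have hm : (0:ℝ) < Fintype.card X := by exact_mod_cast Fintype.card_pos
  have hn : (0:ℝ) < Fintype.card Y := by exact_mod_cast Fintype.card_pos
  set m : ℝ := (Fintype.card X : ℝ)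
  set n : ℝ := (Fintype.card Y : ℝ)
  set S : ℝ := ∑ x : X, ∑ y : Y, f x y * u x * v y with hS
  set Su : ℝ := ∑ x : X, u x ^ 2 with hSu
  set Sv : ℝ := ∑ y : Y, v y ^ 2 with hSv
  set W : ℝ := ∑ x : X, ∑ x' : X, ∑ y : X, ∑ y' : X, g x y * g x y' * g x' y * g x' y' with hW
  have hSu0 : 0 ≤ Su := Finset.sum_nonneg fun _ _ => sq_nonneg _
  have hSv0 : 0 ≤ Sv := Finset.sum_nonneg fun _ _ => sq_nonneg _
  have hng : ∀ x x', n * g x x' = ∑ y : Y, f x y * f x' y := by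
    intro x x'; rw [hg]; field_simp
  set T : ℝ := ∑ x : X, ∑ x' : X, u x * u x' * g x x' with hT
  -- sum of squares of A y equals n * T
  have h2 : ∑ y : Y, (∑ x : X, f x y * u x) ^ 2 = n * T := by
    calc ∑ y : Y, (∑ x : X, f x y * u x) ^ 2
        = ∑ y : Y, ∑ x : X, ∑ x' : X, (f x y * u x) * (f x' y * u x') := by
          simp [sq, Finset.sum_mul_sum]
      _ = ∑ x : X, ∑ x' : X, ∑ y : Y, (f x y * u x) * (f x' y * u x') := by
          rw [Finset.sum_comm]
          exact Finset.sum_congr rfl fun x _ => Finset.sum_comm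
      _ = ∑ x : X, ∑ x' : X, (u x * u x') * ∑ y : Y, f x y * f x' y := by
          refine Finset.sum_congr rfl fun x _ => Finset.sum_congr rfl fun x' _ => ?_
          rw [Finset.mul_sum]; exact Finset.sum_congr rfl fun y _ => by ring
      _ = ∑ x : X, ∑ x' : X, (u x * u x') * (n * g x x') := by
          simp_rw [hng]
      _ = n * T := by
          rw [hT, Finset.mul_sum]
          refine Finset.sum_congr rfl fun x _ => ?_
          rw [Finset.mul_sum]
          exact Finset.sum_congr rfl fun x' _ => by ring
  have hnT0 : 0 ≤ n * T := h2 ▸ Finset.sum_nonneg fun _ _ => sq_nonneg _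
  have hT0 : 0 ≤ T := nonneg_of_mul_nonneg_right hnT0 hn
  -- Step 1: Cauchy-Schwarz in y
  have hSrw : S = ∑ y : Y, v y * ∑ x : X, f x y * u x := by
    rw [hS, Finset.sum_comm]
    refine Finset.sum_congr rfl fun y _ => ?_
    rw [Finset.mul_sum]
    exact Finset.sum_congr rfl fun x _ => by ring
  have h1 : S ^ 2 ≤ Sv * (n * T) := by
    rw [hSrw, ← h2, hSv]
    exact Finset.sum_mul_sq_le_sq_mul_sq _ _ _
  -- Step 2: Cauchy-Schwarz in x
  set D : ℝ := ∑ x : X, (∑ x' : X, g x x' * u x') ^ 2 with hD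
  have hD0 : 0 ≤ D := Finset.sum_nonneg fun _ _ => sq_nonneg _
  have h3 : T ^ 2 ≤ Su * D := by
    have : T = ∑ x : X, u x * ∑ x' : X, g x x' * u x' := by
      rw [hT]
      refine Finset.sum_congr rfl fun x _ => ?_
      rw [Finset.mul_sum]
      exact Finset.sum_congr rfl fun x' _ => by ring
    rw [this, hSu, hD]
    exact Finset.sum_mul_sq_le_sq_mul_sq _ _ _
  -- Step 3: expand D
  have h4 : D = ∑ p : X × X, (u p.1 * u p.2) * ∑ x : X, g x p.1 * g x p.2 := by
    rw [hD, Fintype.sum_prod_type]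
    calc ∑ x : X, (∑ x' : X, g x x' * u x') ^ 2
        = ∑ x : X, ∑ a : X, ∑ b : X, (g x a * u a) * (g x b * u b) := by
          simp [sq, Finset.sum_mul_sum]
      _ = ∑ a : X, ∑ b : X, ∑ x : X, (g x a * u a) * (g x b * u b) := by
          rw [Finset.sum_comm]
          exact Finset.sum_congr rfl fun a _ => Finset.sum_comm
      _ = ∑ a : X, ∑ b : X, (u a * u b) * ∑ x : X, g x a * g x b := by
          refine Finset.sum_congr rfl fun a _ => Finset.sum_congr rfl fun b _ => ?_
          rw [Finset.mul_sum]; exact Finset.sum_congr rfl fun x _ => by ring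
  -- Step 4: Cauchy-Schwarz over pairs
  have swap : ∀ F : X → X → X → X → ℝ,
      ∑ a : X, ∑ b : X, ∑ x : X, ∑ z : X, F x z a b
        = ∑ x : X, ∑ z : X, ∑ a : X, ∑ b : X, F x z a b := by
    intro F
    calc ∑ a : X, ∑ b : X, ∑ x : X, ∑ z : X, F x z a b
        = ∑ p : X × X, ∑ q : X × X, F q.1 q.2 p.1 p.2 := by
          simp only [Fintype.sum_prod_type]
      _ = ∑ q : X × X, ∑ p : X × X, F q.1 q.2 p.1 p.2 := Finset.sum_comm
      _ = ∑ x : X, ∑ z : X, ∑ a : X, ∑ b : X, F x z a b := by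
          simp only [Fintype.sum_prod_type]
  have e1 : ∑ p : X × X, (u p.1 * u p.2) ^ 2 = Su ^ 2 := by
    calc ∑ p : X × X, (u p.1 * u p.2) ^ 2
        = ∑ a : X, ∑ b : X, u a ^ 2 * u b ^ 2 := by
          rw [Fintype.sum_prod_type]; simp [mul_pow]
      _ = Su * Su := (Finset.sum_mul_sum _ _ _ _).symm
      _ = Su ^ 2 := (sq Su).symm
  have e2 : ∑ p : X × X, (∑ x : X, g x p.1 * g x p.2) ^ 2 = W := by
    rw [Fintype.sum_prod_type, hW]
    calc ∑ a : X, ∑ b : X, (∑ x : X, g x a * g x b) ^ 2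
        = ∑ a : X, ∑ b : X, ∑ x : X, ∑ z : X, (g x a * g x b) * (g z a * g z b) := by
          simp [sq, Finset.sum_mul_sum]
      _ = ∑ x : X, ∑ z : X, ∑ a : X, ∑ b : X, (g x a * g x b) * (g z a * g z b) :=
          swap _
      _ = ∑ x : X, ∑ x' : X, ∑ y : X, ∑ y' : X, g x y * g x y' * g x' y * g x' y' := by
          refine Finset.sum_congr rfl fun x _ => Finset.sum_congr rfl fun z _ =>
            Finset.sum_congr rfl fun a _ => Finset.sum_congr rfl fun b _ => by ring
  have hW0 : 0 ≤ W := e2 ▸ Finset.sum_nonneg fun _ _ => sq_nonneg _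
  have h5 : D ^ 2 ≤ Su ^ 2 * W := by
    have hcs := Finset.sum_mul_sq_le_sq_mul_sq (univ : Finset (X × X))
      (fun p => u p.1 * u p.2) (fun p => ∑ x : X, g x p.1 * g x p.2)
    rw [h4]
    rw [e1, e2] at hcs
    exact hcs
  -- key inequality
  have key : S ^ 8 ≤ Su ^ 4 * Sv ^ 4 * n ^ 4 * W := by
    have hk1 : S ^ 8 ≤ (Sv * (n * T)) ^ 4 := by
      calc S ^ 8 = (S ^ 2) ^ 4 := by ring
        _ ≤ (Sv * (n * T)) ^ 4 := by
            apply pow_le_pow_left₀ (sq_nonneg S) h1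
    have hk2 : T ^ 4 ≤ Su ^ 4 * W := by
      calc T ^ 4 = (T ^ 2) ^ 2 := by ring
        _ ≤ (Su * D) ^ 2 := pow_le_pow_left₀ (sq_nonneg T) h3 2
        _ = Su ^ 2 * D ^ 2 := by ring
        _ ≤ Su ^ 2 * (Su ^ 2 * W) := by
            apply mul_le_mul_of_nonneg_left h5 (sq_nonneg Su)
        _ = Su ^ 4 * W := by ring
    calc S ^ 8 ≤ (Sv * (n * T)) ^ 4 := hk1
      _ = Sv ^ 4 * n ^ 4 * T ^ 4 := by ring
      _ ≤ Sv ^ 4 * n ^ 4 * (Su ^ 4 * W) := by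
          apply mul_le_mul_of_nonneg_left hk2 (by positivity)
      _ = Su ^ 4 * Sv ^ 4 * n ^ 4 * W := by ring
  -- now reduce goal
  have hbox : boxNormPow4 g = W / m ^ 4 := by
    rw [boxNormPow4, ← hW, show m ^ 2 * m ^ 2 = m ^ 4 by ring]
  have hbox0 : 0 ≤ boxNormPow4 g := by rw [hbox]; exact div_nonneg hW0 (by positivity)
  have hRHS0 : 0 ≤ (boxNormPow4 g ^ ((1 : ℝ) / 4)) ^ ((1 : ℝ) / 2) * L2avg u * L2avg v := by
    have := Real.sqrt_nonneg ((∑ x : X, u x ^ 2) / m)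
    have := Real.sqrt_nonneg ((∑ y : Y, v y ^ 2) / n)
    have h8 : (0:ℝ) ≤ (boxNormPow4 g ^ ((1 : ℝ) / 4)) ^ ((1 : ℝ) / 2) :=
      Real.rpow_nonneg (Real.rpow_nonneg hbox0 _) _
    unfold L2avg
    positivity
  refine le_of_pow_le_pow_left₀ (n := 8) (by norm_num) hRHS0 ?_
  have hLHS : |S / (m * n)| ^ 8 = S ^ 8 / (m ^ 8 * n ^ 8) := by
    rw [abs_div, div_pow, ← abs_pow]
    congr 1
    · exact abs_of_nonneg (by positivity)
    · rw [abs_of_nonneg (by positivity)]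
      ring
  have hRHSpow : ((boxNormPow4 g ^ ((1 : ℝ) / 4)) ^ ((1 : ℝ) / 2) * L2avg u * L2avg v) ^ 8
      = boxNormPow4 g * (Su / m) ^ 4 * (Sv / n) ^ 4 := by
    have hb : (boxNormPow4 g ^ ((1 : ℝ) / 4)) ^ ((1 : ℝ) / 2) = boxNormPow4 g ^ ((1:ℝ)/8) := by
      rw [← Real.rpow_mul hbox0]
      norm_num
    have hb8 : ((boxNormPow4 g ^ ((1:ℝ)/8)) : ℝ) ^ (8:ℕ) = boxNormPow4 g := by
      rw [← Real.rpow_natCast (boxNormPow4 g ^ ((1:ℝ)/8)) 8, ← Real.rpow_mul hbox0]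
      norm_num
    have hu8 : (L2avg u) ^ (8:ℕ) = (Su / m) ^ 4 := by
      rw [L2avg]
      rw [show (8:ℕ) = 2 * 4 by rfl, pow_mul, Real.sq_sqrt (by positivity)]
    have hv8 : (L2avg v) ^ (8:ℕ) = (Sv / n) ^ 4 := by
      rw [L2avg]
      rw [show (8:ℕ) = 2 * 4 by rfl, pow_mul, Real.sq_sqrt (by positivity)]
    rw [hb, mul_pow, mul_pow, hb8, hu8, hv8]
  rw [hLHS, hRHSpow, hbox]
  rw [div_le_iff₀ (by positivity)]
  calc S ^ 8 ≤ Su ^ 4 * Sv ^ 4 * n ^ 4 * W := key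
    _ = W / m ^ 4 * (Su / m) ^ 4 * (Sv / n) ^ 4 * (m ^ 8 * n ^ 8) := by
        field_simp
end

section
/- Let H be a finite group, let m, k be positive integers with k ≤ m, and let μ and ν be (ε,k)-good probability distributions on H^m. Then the convolution μ * ν is (ε², k)-good. -/
open Finset

/-- A distribution `D` on `H^m` is `(ε,k)`-good if the probability of any fixing of
any `k` coordinates is within a factor `1 ± ε` of the uniform one. -/
def IsGood {H : Type*} [Fintype H] [DecidableEq H] {m : ℕ}
    (D : (Fin m → H) → ℝ) (ε : ℝ) (k : ℕ) : Prop :=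
  ∀ s : Finset (Fin m), s.card = k → ∀ g : Fin m → H,
    (1 - ε) / (Fintype.card H : ℝ) ^ k ≤
      (∑ x ∈ Finset.univ.filter (fun x : Fin m → H => ∀ i ∈ s, x i = g i), D x) ∧
    (∑ x ∈ Finset.univ.filter (fun x : Fin m → H => ∀ i ∈ s, x i = g i), D x) ≤
      (1 + ε) / (Fintype.card H : ℝ) ^ k

/-- Convolution of two functions on the group `H^m` (componentwise multiplication). -/
noncomputable def conv {H : Type*} [Group H] [Fintype H] {m : ℕ}
    (μ ν : (Fin m → H) → ℝ) : (Fin m → H) → ℝ :=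
  fun x => ∑ y : Fin m → H, μ y * ν (y⁻¹ * x)

lemma fiber_sum {H : Type*} [Group H] [Fintype H] [DecidableEq H] {m : ℕ}
    (s : Finset (Fin m)) (F : (Fin m → H) → ℝ) (ψ : Fin m → H → H) :
    (∑ y : Fin m → H, F y) =
    ∑ h ∈ univ.filter (fun h : Fin m → H => ∀ i ∉ s, h i = 1),
      ∑ y ∈ univ.filter (fun y : Fin m → H => ∀ i ∈ s, h i = ψ i (y i)), F y := by
  classical
  set f : (Fin m → H) → (Fin m → H) := fun y i => if i ∈ s then ψ i (y i) else 1 with hf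
  rw [← Finset.sum_fiberwise univ f F, Finset.sum_filter]
  apply Finset.sum_congr rfl
  intro h _
  by_cases hR : ∀ i ∉ s, h i = 1
  · rw [if_pos hR]
    apply Finset.sum_congr _ (fun _ _ => rfl)
    apply Finset.filter_congr
    intro y _
    constructor
    · intro hy i hi
      have := congrFun hy i
      simp only [hf, if_pos hi] at this
      exact this.symm
    · intro hy
      funext i
      by_cases hi : i ∈ s
      · simp only [hf, if_pos hi]; exact (hy i hi).symm
      · simp only [hf, if_neg hi]; exact (hR i hi).symm
  · rw [if_neg hR]
    rw [Finset.sum_eq_zero]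
    intro y hy
    simp only [Finset.mem_filter, Finset.mem_univ, true_and] at hy
    exfalso
    apply hR
    intro i hi
    have := congrFun hy i
    simp only [hf, if_neg hi] at this
    exact this.symm

lemma conv_Q {H : Type*} [Group H] [Fintype H] [DecidableEq H] {m : ℕ}
    (s : Finset (Fin m)) (g : Fin m → H) (μ ν : (Fin m → H) → ℝ) :
    (∑ x ∈ univ.filter (fun x : Fin m → H => ∀ i ∈ s, x i = g i),
      (∑ y : Fin m → H, μ y * ν (y⁻¹ * x))) =
    ∑ y : Fin m → H, μ y *
      ∑ z ∈ univ.filter (fun z : Fin m → H => ∀ i ∈ s, z i = (y⁻¹ * g) i), ν z := by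
  rw [Finset.sum_comm]
  apply Finset.sum_congr rfl
  intro y _
  rw [Finset.mul_sum]
  apply Finset.sum_nbij' (i := fun x => y⁻¹ * x) (j := fun z => y * z)
  · intro x hx
    simp only [Finset.mem_filter, Finset.mem_univ, true_and] at hx ⊢
    intro i hi
    simp [Pi.mul_apply, Pi.inv_apply, hx i hi]
  · intro z hz
    simp only [Finset.mem_filter, Finset.mem_univ, true_and] at hz ⊢
    intro i hi
    have := hz i hi
    simp only [Pi.mul_apply, Pi.inv_apply] at this ⊢
    rw [this]
    group
  · intro x _; simp [mul_assoc]
  · intro z _; simp [← mul_assoc]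
  · intro x _; rfl

lemma cardR {H : Type*} [Group H] [Fintype H] [DecidableEq H] {m : ℕ}
    (s : Finset (Fin m)) :
    (univ.filter (fun h : Fin m → H => ∀ i ∉ s, h i = 1)).card =
      Fintype.card H ^ s.card := by
  classical
  have : (univ.filter (fun h : Fin m → H => ∀ i ∉ s, h i = 1)).card =
      (univ : Finset (↥s → H)).card := by
    apply Finset.card_bij (fun h _ => fun j : ↥s => h j)
    · intro _ _; exact Finset.mem_univ _
    · intro a ha b hb hab
      simp only [Finset.mem_filter, Finset.mem_univ, true_and] at ha hb
      funext i
      by_cases hi : i ∈ s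
      · exact congrFun hab ⟨i, hi⟩
      · rw [ha i hi, hb i hi]
    · intro b _
      refine ⟨fun i => if hi : i ∈ s then b ⟨i, hi⟩ else 1, ?_, ?_⟩
      · simp only [Finset.mem_filter, Finset.mem_univ, true_and]
        intro i hi; simp [hi]
      · funext j; simp [j.2]
  rw [this, Finset.card_univ, Fintype.card_fun, Fintype.card_coe]

theorem stmt9 {H : Type*} [Group H] [Fintype H] [DecidableEq H]
    (m k : ℕ) (hm : 0 < m) (hk : 0 < k) (hkm : k ≤ m)
    (ε : ℝ) (μ ν : (Fin m → H) → ℝ)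
    (hμ0 : ∀ x, 0 ≤ μ x) (hμ1 : (∑ x, μ x) = 1)
    (hν0 : ∀ x, 0 ≤ ν x) (hν1 : (∑ x, ν x) = 1)
    (hμ : IsGood μ ε k) (hν : IsGood ν ε k) :
    IsGood (conv μ ν) (ε ^ 2) k := by
    classical
  intro s hs g
  set N : ℝ := (Fintype.card H : ℝ) ^ k with hNdef
  have hN : (0 : ℝ) < N := pow_pos (by exact_mod_cast Fintype.card_pos) k
  set R : Finset (Fin m → H) := univ.filter (fun h : Fin m → H => ∀ i ∉ s, h i = 1) with hRdef
  set Qμ : (Fin m → H) → ℝ :=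
    fun w => ∑ x ∈ univ.filter (fun x : Fin m → H => ∀ i ∈ s, x i = w i), μ x with hQμ
  set Qν : (Fin m → H) → ℝ :=
    fun w => ∑ x ∈ univ.filter (fun x : Fin m → H => ∀ i ∈ s, x i = w i), ν x with hQν
  -- Qν depends only on values on s
  have Qdep : ∀ w w' : Fin m → H, (∀ i ∈ s, w i = w' i) → Qν w = Qν w' := by
    intro w w' hww
    apply Finset.sum_congr _ (fun _ _ => rfl)
    apply Finset.filter_congr
    intro x _
    constructor
    · intro h i hi; rw [h i hi, hww i hi]
    · intro h i hi; rw [h i hi, hww i hi]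
  -- Step 1+2: rewrite the convolution sum
  have main : (∑ x ∈ univ.filter (fun x : Fin m → H => ∀ i ∈ s, x i = g i), conv μ ν x)
      = ∑ h ∈ R, Qμ h * Qν (h⁻¹ * g) := by
    have step1 := conv_Q s g μ ν
    have step2 := fiber_sum s (fun y => μ y * Qν (y⁻¹ * g)) (fun _ a => a)
    calc (∑ x ∈ univ.filter (fun x : Fin m → H => ∀ i ∈ s, x i = g i), conv μ ν x)
        = ∑ y : Fin m → H, μ y * Qν (y⁻¹ * g) := step1
      _ = ∑ h ∈ R, ∑ y ∈ univ.filter (fun y : Fin m → H => ∀ i ∈ s, h i = y i),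
            μ y * Qν (y⁻¹ * g) := step2
      _ = ∑ h ∈ R, Qμ h * Qν (h⁻¹ * g) := by
          apply Finset.sum_congr rfl
          intro h _
          have heq : ∀ y ∈ univ.filter (fun y : Fin m → H => ∀ i ∈ s, h i = y i),
              μ y * Qν (y⁻¹ * g) = μ y * Qν (h⁻¹ * g) := by
            intro y hy
            simp only [Finset.mem_filter, Finset.mem_univ, true_and] at hy
            rw [Qdep (y⁻¹ * g) (h⁻¹ * g) (fun i hi => by
              simp [Pi.mul_apply, Pi.inv_apply, hy i hi])]
          rw [Finset.sum_congr rfl heq, ← Finset.sum_mul]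
          congr 1
          apply Finset.sum_congr _ (fun _ _ => rfl)
          apply Finset.filter_congr
          intro y _
          exact ⟨fun h' i hi => (h' i hi).symm, fun h' i hi => (h' i hi).symm⟩
  -- sums over R
  have sumA : (∑ h ∈ R, Qμ h) = 1 := by
    rw [← hμ1, fiber_sum s μ (fun _ a => a)]
    apply Finset.sum_congr rfl
    intro h _
    apply Finset.sum_congr _ (fun _ _ => rfl)
    apply Finset.filter_congr
    intro y _
    exact ⟨fun h' i hi => (h' i hi).symm, fun h' i hi => (h' i hi).symm⟩
  have sumB : (∑ h ∈ R, Qν (h⁻¹ * g)) = 1 := by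
    rw [← hν1, fiber_sum s ν (fun i a => g i * a⁻¹)]
    apply Finset.sum_congr rfl
    intro h _
    apply Finset.sum_congr _ (fun _ _ => rfl)
    apply Finset.filter_congr
    intro x _
    constructor
    · intro h' i hi
      have := h' i hi
      simp only [Pi.mul_apply, Pi.inv_apply] at this
      rw [this]; group
    · intro h' i hi
      have := h' i hi
      simp only [Pi.mul_apply, Pi.inv_apply]
      rw [this]; group
  have hcard : (R.card : ℝ) = N := by
    rw [hRdef, cardR s, hs, hNdef]
    push_cast
    ring
  -- pointwise bounds
  have hbound : ∀ h ∈ R, |(Qμ h - 1/N) * (Qν (h⁻¹ * g) - 1/N)| ≤ ε^2 / N^2 := by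
    intro h _
    have e1 : (1 - ε)/N = 1/N - ε/N := by ring
    have e2 : (1 + ε)/N = 1/N + ε/N := by ring
    obtain ⟨l1, u1⟩ := hμ s hs h
    obtain ⟨l2, u2⟩ := hν s hs (h⁻¹ * g)
    have b1 : |Qμ h - 1/N| ≤ ε/N := abs_le.mpr ⟨by rw [e1] at l1; linarith, by rw [e2] at u1; linarith⟩
    have b2 : |Qν (h⁻¹ * g) - 1/N| ≤ ε/N := abs_le.mpr ⟨by rw [e1] at l2; linarith, by rw [e2] at u2; linarith⟩
    rw [abs_mul]
    calc |Qμ h - 1/N| * |Qν (h⁻¹ * g) - 1/N| ≤ (ε/N) * (ε/N) :=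
          mul_le_mul b1 b2 (abs_nonneg _) ((abs_nonneg _).trans b1)
      _ = ε^2 / N^2 := by ring
  -- key identity
  have key : (∑ h ∈ R, Qμ h * Qν (h⁻¹ * g)) - 1/N
      = ∑ h ∈ R, (Qμ h - 1/N) * (Qν (h⁻¹ * g) - 1/N) := by
    have expand : ∀ h ∈ R, (Qμ h - 1/N) * (Qν (h⁻¹ * g) - 1/N)
        = Qμ h * Qν (h⁻¹ * g) - (1/N) * Qμ h - (1/N) * Qν (h⁻¹ * g) + 1/N^2 := by
      intro h _; ring
    rw [Finset.sum_congr rfl expand]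
    rw [Finset.sum_add_distrib, Finset.sum_sub_distrib, Finset.sum_sub_distrib,
        ← Finset.mul_sum, ← Finset.mul_sum, sumA, sumB, Finset.sum_const, nsmul_eq_mul, hcard]
    field_simp
    ring
  have habs : |(∑ h ∈ R, Qμ h * Qν (h⁻¹ * g)) - 1/N| ≤ ε^2 / N := by
    rw [key]
    refine (Finset.abs_sum_le_sum_abs _ _).trans ?_
    refine (Finset.sum_le_sum hbound).trans ?_
    rw [Finset.sum_const, nsmul_eq_mul, hcard]
    have hNne : N ≠ 0 := ne_of_gt hN
    rw [show N * (ε^2/N^2) = ε^2/N by field_simp]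
  obtain ⟨lo, hi⟩ := abs_le.mp habs
  have e1 : (1 - ε^2)/N = 1/N - ε^2/N := by ring
  have e2 : (1 + ε^2)/N = 1/N + ε^2/N := by ring
  rw [main]
  constructor
  · rw [e1]; linarith
  · rw [e2]; linarith
end

section
/- There exist constants c > 0 and C > 0 such that the following holds for every prime power q. Let G = SL(2,q), let D be a probability distribution on G, and let U be the uniform distribution on G. Suppose the distribution of the trace Tr(x) of a sample x from D is ε-close in statistical distance to the uniform distribution on F_q. Then the distribution of the conjugacy class of a sample from D is (Cε + C/q)-close in statistical distance to the distribution of the conjugacy class of a sample from U. -/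
/-!
For `t ^ 2 ≠ 4` the elements of `SL(2, q)` of trace `t` form a single conjugacy class: such a
`g` is not scalar, so some `v` makes `v, g v` a basis, in which `g` becomes the companion matrix
of `X ^ 2 - t X + 1`; the determinant of the change of basis can be corrected to `1` by the
centralizer elements `x + y C` of the companion matrix `C`, whose determinants
`x ^ 2 + t x y + y ^ 2` cover all of `F_q`. Hence the class distribution and the trace
distribution agree except on the traces `± 2`, which carry `O(ε + 1/q)` of the mass of `D`.
Finally each trace fibre has at least `q (q - 1)` of the `q (q ^ 2 - 1)` elements, so the trace of
a uniform element is `O(1/q)`-close to uniform.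
-/

open Matrix Finset

theorem FiniteField.exists_sq_add_mul_mul_add_sq_eq {F : Type*} [Field F] [Fintype F] {t : F}
    (ht : t ^ 2 ≠ 4) (c : F) : ∃ x y : F, x ^ 2 + t * x * y + y ^ 2 = c := by
  by_cases hF : ringChar F = 2
  · obtain ⟨s, rfl⟩ := FiniteField.isSquare_of_char_two hF c
    exact ⟨s, 0, by ring⟩
  have h2 : (2 : F) ≠ 0 := Ring.two_ne_zero hF
  have h4t : 4 - t ^ 2 ≠ 0 := sub_ne_zero.mpr ht.symm
  -- `4 (x ^ 2 + t x y + y ^ 2) = (2 x + t y) ^ 2 + (4 - t ^ 2) y ^ 2`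
  obtain ⟨X, Y, hXY⟩ := FiniteField.exists_root_sum_quadratic (f := Polynomial.X ^ 2)
    (g := Polynomial.C (4 - t ^ 2) * Polynomial.X ^ 2 - Polynomial.C (4 * c)) (by simp)
    (by compute_degree!) (FiniteField.odd_card_of_char_ne_two hF)
  refine ⟨(X - t * Y) / 2, Y, ?_⟩
  simp only [Polynomial.eval_pow, Polynomial.eval_X, Polynomial.eval_sub, Polynomial.eval_mul,
    Polynomial.eval_C] at hXY
  field_simp
  linear_combination hXY

theorem Matrix.card_specialLinearGroup_mul (F : Type*) [Field F] [Fintype F] (n : Type*)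
    [Fintype n] [DecidableEq n] [Nonempty n] :
    Nat.card (SpecialLinearGroup n F) * (Fintype.card F - 1) = Nat.card (GL n F) := by
  classical
  have hrange : (SpecialLinearGroup.toGL : SpecialLinearGroup n F →* GL n F).range
      = (GeneralLinearGroup.det : GL n F →* Fˣ).ker := by
    ext g
    constructor
    · rintro ⟨s, rfl⟩
      ext; simp
    · intro hg
      exact ⟨⟨g, by simpa [Units.ext_iff] using hg⟩, Units.ext rfl⟩
  rw [← Subgroup.card_mul_index (GeneralLinearGroup.det : GL n F →* Fˣ).ker,
    Subgroup.index_ker, MonoidHom.range_eq_top.mpr GeneralLinearGroup.det_surjective,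
    Subgroup.card_top, Nat.card_eq_fintype_card (α := Fˣ), Fintype.card_units, ← hrange,
    Nat.card_congr (MonoidHom.ofInjective SpecialLinearGroup.toGL_injective).toEquiv]

theorem Matrix.card_specialLinearGroup_fin_two {F : Type*} [Field F] [Fintype F] [DecidableEq F] :
    Fintype.card (SpecialLinearGroup (Fin 2) F) = Fintype.card F * (Fintype.card F ^ 2 - 1) := by
  have h := card_specialLinearGroup_mul F (Fin 2)
  rw [card_GL_field, Fin.prod_univ_two, Nat.card_eq_fintype_card] at h
  have hq : 1 < Fintype.card F := Fintype.one_lt_card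
  refine Nat.eq_of_mul_eq_mul_right (Nat.sub_pos_of_lt hq) (h.trans ?_)
  simp only [Fin.val_zero, Fin.val_one, pow_zero, pow_one]
  rw [sq, ← Nat.mul_sub_one]
  ring

theorem image_conj_eq_image_conj_iff {G : Type*} [Group G] [Fintype G] [DecidableEq G]
    {g h : G} :
    univ.image (fun u => u⁻¹ * g * u) = univ.image (fun u => u⁻¹ * h * u) ↔ IsConj g h := by
  have hmem : ∀ k x : G, x ∈ univ.image (fun u => u⁻¹ * k * u) ↔ IsConj k x := fun k x => by
    simp only [mem_image, mem_univ, true_and, isConj_iff]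
    exact ⟨fun ⟨u, hu⟩ => ⟨u⁻¹, by simpa using hu⟩, fun ⟨c, hc⟩ => ⟨c⁻¹, by simpa using hc⟩⟩
  refine ⟨fun H => (hmem g h).mp (H ▸ (hmem h h).mpr (IsConj.refl h)), fun hgh => ?_⟩
  ext x
  rw [hmem, hmem]
  exact ⟨hgh.symm.trans, hgh.trans⟩

theorem sum_abs_sub_le_of_sum_eq {ι : Type*} (s : Finset ι) {x y : ι → ℝ}
    (hsum : ∑ i ∈ s, x i = ∑ i ∈ s, y i) {η : ℝ} (hη : 0 ≤ η) (hxy : ∀ i ∈ s, y i - η ≤ x i) :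
    ∑ i ∈ s, |x i - y i| ≤ 2 * #s * η := by
  calc ∑ i ∈ s, |x i - y i| ≤ ∑ i ∈ s, (x i - y i + 2 * η) :=
        sum_le_sum fun i hi => abs_sub_le_iff.mpr ⟨by linarith, by linarith [hxy i hi]⟩
    _ = 2 * #s * η := by
        rw [sum_add_distrib, sum_sub_distrib, hsum, sub_self, zero_add, sum_const, nsmul_eq_mul]
        ring

theorem sum_abs_sub_add_sum_add_le {γ : Type*} [Fintype γ] (T B : Finset γ) (x y : γ → ℝ)
    (p : ℝ) :
    ∑ t ∈ T, |x t - y t| + ∑ t ∈ B, (x t + y t)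
      ≤ 2 * (∑ t, |x t - p| + ∑ t, |y t - p|) + #B * (2 * p) := by
  have hT : ∑ t ∈ T, |x t - y t| ≤ ∑ t, (|x t - p| + |y t - p|) :=
    (sum_le_sum_of_subset_of_nonneg (subset_univ T) fun _ _ _ => abs_nonneg _).trans
      (sum_le_sum fun t _ => (abs_sub_le (x t) p (y t)).trans_eq (by rw [abs_sub_comm p]))
  have hB : ∑ t ∈ B, (x t + y t) ≤ ∑ t ∈ B, (2 * p + (|x t - p| + |y t - p|)) :=
    sum_le_sum fun t _ => by linarith [le_abs_self (x t - p), le_abs_self (y t - p)]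
  rw [sum_add_distrib (f := fun _ => 2 * p), sum_const, nsmul_eq_mul] at hB
  have hB' : ∑ t ∈ B, (|x t - p| + |y t - p|) ≤ ∑ t, (|x t - p| + |y t - p|) :=
    sum_le_sum_of_subset_of_nonneg (subset_univ B) fun _ _ _ => by positivity
  rw [← sum_add_distrib]
  linarith

section Pushforward

variable {α β γ : Type*} [Fintype α] [DecidableEq β] [DecidableEq γ]

def pushforward (f : α → β) (μ : α → ℝ) (b : β) : ℝ :=
  ∑ a ∈ univ.filter (fun a => f a = b), μ a

theorem pushforward_nonneg {f : α → β} {μ : α → ℝ} (hμ : 0 ≤ μ) (b : β) :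
    0 ≤ pushforward f μ b :=
  sum_nonneg fun a _ => hμ a

theorem sum_pushforward [Fintype β] (f : α → β) (μ : α → ℝ) :
    ∑ b, pushforward f μ b = ∑ a, μ a :=
  sum_fiberwise univ f μ

variable {κ : α → β} {τ : α → γ}

theorem image_eq_biUnion_image_fiber :
    univ.image κ = (univ.image τ).biUnion (fun t => (univ.filter (fun a => τ a = t)).image κ) := by
  ext S
  simp only [mem_image, mem_biUnion, mem_filter, mem_univ, true_and]
  exact ⟨fun ⟨a, h⟩ => ⟨τ a, ⟨a, rfl⟩, a, rfl, h⟩, fun ⟨_, _, a, _, h⟩ => ⟨a, h⟩⟩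

theorem pairwiseDisjoint_image_fiber (hτ : ∀ a b, κ a = κ b → τ a = τ b) :
    (univ.image τ : Set γ).PairwiseDisjoint
      (fun t => (univ.filter (fun a => τ a = t)).image κ) := by
  intro t _ t' _ htt'
  refine disjoint_left.mpr fun S hS hS' => htt' ?_
  obtain ⟨a, ha, rfl⟩ := mem_image.mp hS
  obtain ⟨b, hb, hab⟩ := mem_image.mp hS'
  simp only [mem_filter, mem_univ, true_and] at ha hb
  rw [← ha, ← hb, hτ b a hab]

theorem filter_fiber_eq_of_mem_image_fiber (hτ : ∀ a b, κ a = κ b → τ a = τ b) {t : γ} {S : β}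
    (hS : S ∈ (univ.filter (fun a => τ a = t)).image κ) :
    (univ.filter (fun a => τ a = t)).filter (fun a => κ a = S)
      = univ.filter (fun a => κ a = S) := by
  obtain ⟨b, hb, rfl⟩ := mem_image.mp hS
  rw [filter_filter]
  refine filter_congr fun a _ => ⟨And.right, fun h => ⟨?_, h⟩⟩
  rw [hτ a b h]
  simpa using hb

theorem sum_pushforward_image_fiber (hτ : ∀ a b, κ a = κ b → τ a = τ b) (μ : α → ℝ)
    (t : γ) :
    ∑ S ∈ (univ.filter (fun a => τ a = t)).image κ, pushforward κ μ S = pushforward τ μ t := by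
  rw [pushforward, ← sum_fiberwise_of_maps_to (g := κ) (fun a ha => mem_image_of_mem κ ha)]
  refine sum_congr rfl fun S hS => ?_
  rw [pushforward, filter_fiber_eq_of_mem_image_fiber hτ hS]

theorem sum_abs_pushforward_image_fiber_le (hτ : ∀ a b, κ a = κ b → τ a = τ b) {μ ν : α → ℝ}
    (hμ : 0 ≤ μ) (hν : 0 ≤ ν) (t : γ) :
    ∑ S ∈ (univ.filter (fun a => τ a = t)).image κ, |pushforward κ μ S - pushforward κ ν S|
      ≤ pushforward τ μ t + pushforward τ ν t := by
  rw [← sum_pushforward_image_fiber hτ, ← sum_pushforward_image_fiber hτ, ← sum_add_distrib]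
  refine sum_le_sum fun S _ => abs_sub_le_iff.mpr ⟨?_, ?_⟩ <;>
    linarith [pushforward_nonneg (f := κ) hμ S, pushforward_nonneg (f := κ) hν S]

theorem sum_abs_pushforward_image_fiber_eq (hτ : ∀ a b, κ a = κ b → τ a = τ b) {t : γ}
    (hκ : ∀ a b, τ a = t → τ b = t → κ a = κ b) (μ ν : α → ℝ) :
    ∑ S ∈ (univ.filter (fun a => τ a = t)).image κ, |pushforward κ μ S - pushforward κ ν S|
      = |pushforward τ μ t - pushforward τ ν t| := by
  have hcard : #((univ.filter (fun a => τ a = t)).image κ) ≤ 1 := by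
    refine card_le_one.mpr fun S hS S' hS' => ?_
    obtain ⟨a, ha, rfl⟩ := mem_image.mp hS
    obtain ⟨b, hb, rfl⟩ := mem_image.mp hS'
    simp only [mem_filter, mem_univ, true_and] at ha hb
    exact hκ a b ha hb
  rw [← sum_pushforward_image_fiber hτ, ← sum_pushforward_image_fiber hτ, ← sum_sub_distrib]
  rcases Nat.le_one_iff_eq_zero_or_eq_one.mp hcard with h | h
  · simp [card_eq_zero.mp h]
  · obtain ⟨S, hS⟩ := card_eq_one.mp h
    simp [hS]

theorem sum_abs_pushforward_sub_le (hτ : ∀ a b, κ a = κ b → τ a = τ b) (B : Finset γ)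
    (hκ : ∀ a b, τ a ∉ B → τ a = τ b → κ a = κ b)
    {μ ν : α → ℝ} (hμ : 0 ≤ μ) (hν : 0 ≤ ν) :
    ∑ S ∈ univ.image κ, |pushforward κ μ S - pushforward κ ν S|
      ≤ ∑ t ∈ univ.image τ, |pushforward τ μ t - pushforward τ ν t|
        + ∑ t ∈ B, (pushforward τ μ t + pushforward τ ν t) := by
  have hfiber : ∀ t, ∑ S ∈ (univ.filter (fun a => τ a = t)).image κ,
      |pushforward κ μ S - pushforward κ ν S|
        ≤ |pushforward τ μ t - pushforward τ ν t|
          + if t ∈ B then pushforward τ μ t + pushforward τ ν t else 0 := by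
    intro t
    split_ifs with ht
    · exact (sum_abs_pushforward_image_fiber_le hτ hμ hν t).trans
        (le_add_of_nonneg_left (abs_nonneg _))
    · rw [add_zero, sum_abs_pushforward_image_fiber_eq hτ
        (fun a b ha hb => hκ a b (ha ▸ ht) (ha.trans hb.symm))]
  rw [image_eq_biUnion_image_fiber (τ := τ), sum_biUnion (pairwiseDisjoint_image_fiber hτ)]
  refine (sum_le_sum fun t _ => hfiber t).trans ?_
  rw [sum_add_distrib, sum_ite_mem]
  exact add_le_add le_rfl (sum_le_sum_of_subset_of_nonneg inter_subset_right fun t _ _ =>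
    add_nonneg (pushforward_nonneg hμ t) (pushforward_nonneg hν t))

end Pushforward

namespace Matrix.SpecialLinearGroup

section CommRing

variable {R : Type*} [CommRing R]

def companion (t : R) : SpecialLinearGroup (Fin 2) R :=
  ⟨!![0, -1; 1, t], by simp [det_fin_two_of]⟩

def krylovMatrix (g : Matrix (Fin 2) (Fin 2) R) (v : Fin 2 → R) : Matrix (Fin 2) (Fin 2) R :=
  (of ![v, g *ᵥ v])ᵀ

theorem mul_krylovMatrix (g : SpecialLinearGroup (Fin 2) R) (v : Fin 2 → R) :
    g * krylovMatrix g v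
      = krylovMatrix g v * companion (trace (g : Matrix (Fin 2) (Fin 2) R)) := by
  have hdet := g.2
  rw [det_fin_two] at hdet
  ext i j
  fin_cases i <;> fin_cases j <;>
    simp only [krylovMatrix, companion, mulVec_fin_two, mul_apply, transpose_apply, of_apply, Fin.sum_univ_two,
      trace_fin_two, cons_val', cons_val_zero, cons_val_one, cons_val_fin_one, Fin.zero_eta,
      Fin.mk_one, Fin.isValue]
  · ring
  · linear_combination (-v 0) * hdet
  · ring
  · linear_combination (-v 1) * hdet

theorem commute_companion_add_smul (t x y : R) :
    Commute (companion t : Matrix (Fin 2) (Fin 2) R) (x • 1 + y • (companion t : _)) :=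
  ((Commute.one_right _).smul_right x).add_right ((Commute.refl _).smul_right y)

theorem det_smul_one_add_smul_companion (t x y : R) :
    det (x • 1 + y • (companion t : Matrix (Fin 2) (Fin 2) R)) = x ^ 2 + t * x * y + y ^ 2 := by
  rw [det_fin_two]
  simp only [companion, add_apply, smul_apply, one_apply_eq, one_apply_ne zero_ne_one,
    one_apply_ne one_ne_zero, of_apply, cons_val', cons_val_zero, cons_val_one, cons_val_fin_one,
    smul_eq_mul]
  ring

theorem trace_eq_of_isConj {g h : SpecialLinearGroup (Fin 2) R} (hgh : IsConj g h) :
    trace (g : Matrix (Fin 2) (Fin 2) R) = trace (h : Matrix (Fin 2) (Fin 2) R) := by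
  obtain ⟨c, rfl⟩ := isConj_iff.mp hgh
  rw [coe_mul, trace_mul_comm, ← coe_mul, inv_mul_cancel_left]

end CommRing

variable {F : Type*} [Field F]

theorem exists_det_krylovMatrix_ne_zero {g : SpecialLinearGroup (Fin 2) F}
    (hg : trace (g : Matrix (Fin 2) (Fin 2) F) ^ 2 ≠ 4) :
    ∃ v : Fin 2 → F, det (krylovMatrix g v) ≠ 0 := by
  by_contra! h
  have hdet := det_fin_two (g : Matrix (Fin 2) (Fin 2) F)
  rw [det_coe] at hdet
  have h0 := h ![1, 0]
  have h1 := h ![0, 1]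
  have h2 := h ![1, 1]
  -- `det (krylovMatrix g v) = 0` for `v = e₀, e₁, e₀ + e₁` forces `g` to be scalar
  simp only [krylovMatrix, det_transpose, det_fin_two, mulVec_fin_two, of_apply, cons_val',
    cons_val_zero, cons_val_one, cons_val_fin_one] at h0 h1 h2
  apply hg
  rw [trace_fin_two]
  linear_combination -4 * hdet + (g 1 1 - g 0 0) * (h2 - h0 - h1) + 4 * g 0 1 * h0

theorem isConj_companion_trace [Fintype F] {g : SpecialLinearGroup (Fin 2) F}
    (hg : trace (g : Matrix (Fin 2) (Fin 2) F) ^ 2 ≠ 4) :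
    IsConj (companion (trace (g : Matrix (Fin 2) (Fin 2) F))) g := by
  set t := trace (g : Matrix (Fin 2) (Fin 2) F)
  obtain ⟨v, hv⟩ := exists_det_krylovMatrix_ne_zero hg
  obtain ⟨x, y, hxy⟩ :=
    FiniteField.exists_sq_add_mul_mul_add_sq_eq hg (det (krylovMatrix g v))⁻¹
  let u : SpecialLinearGroup (Fin 2) F :=
    ⟨krylovMatrix g v * (x • 1 + y • (companion t : _)), by
      rw [det_mul, det_smul_one_add_smul_companion, hxy, mul_inv_cancel₀ hv]⟩
  refine isConj_iff.mpr ⟨u, mul_inv_eq_of_eq_mul (Subtype.ext ?_)⟩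
  change krylovMatrix g v * _ * companion t = g * (krylovMatrix g v * _)
  rw [← mul_assoc, mul_krylovMatrix, mul_assoc, mul_assoc, (commute_companion_add_smul t x y).eq]

theorem isConj_of_trace_eq [Fintype F] {g h : SpecialLinearGroup (Fin 2) F}
    (hg : trace (g : Matrix (Fin 2) (Fin 2) F) ^ 2 ≠ 4)
    (hgh : trace (g : Matrix (Fin 2) (Fin 2) F) = trace (h : Matrix (Fin 2) (Fin 2) F)) :
    IsConj g h :=
  (isConj_companion_trace hg).symm.trans (hgh ▸ isConj_companion_trace (hgh ▸ hg))

theorem card_trace_eq_ge [Fintype F] [DecidableEq F] (t : F) :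
    Fintype.card F * (Fintype.card F - 1)
      ≤ #(univ.filter fun g : SpecialLinearGroup (Fin 2) F =>
          trace (g : Matrix (Fin 2) (Fin 2) F) = t) := by
  let m : F × Fˣ → SpecialLinearGroup (Fin 2) F := fun p =>
    ⟨!![p.1, p.2; (p.1 * (t - p.1) - 1) / p.2, t - p.1], by
      rw [det_fin_two_of, mul_div_cancel₀ _ p.2.ne_zero]; ring⟩
  have hm : Function.Injective m := fun p p' h => by
    have h00 := congrArg (fun g : SpecialLinearGroup (Fin 2) F => g 0 0) h
    have h01 := congrArg (fun g : SpecialLinearGroup (Fin 2) F => g 0 1) h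
    simp only [m, of_apply, cons_val', cons_val_zero, empty_val', cons_val_fin_one,
      cons_val_one] at h00 h01
    exact Prod.ext h00 (Units.ext h01)
  calc Fintype.card F * (Fintype.card F - 1) = #(univ : Finset (F × Fˣ)) := by
        simp [Fintype.card_units]
    _ ≤ _ := card_le_card_of_injOn m (fun p _ => by
          simp only [coe_filter, mem_univ, true_and, Set.mem_ofPred_eq, trace_fin_two]
          exact add_sub_cancel p.1 t) hm.injOn

theorem sum_abs_pushforward_trace_uniform_sub_le [Fintype F] [DecidableEq F] :
    ∑ t : F, |pushforward (fun g : SpecialLinearGroup (Fin 2) F =>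
        trace (g : Matrix (Fin 2) (Fin 2) F))
      (fun _ => 1 / (Fintype.card (SpecialLinearGroup (Fin 2) F) : ℝ)) t
        - 1 / (Fintype.card F : ℝ)| ≤ 2 / (Fintype.card F : ℝ) := by
  set τ := fun g : SpecialLinearGroup (Fin 2) F => trace (g : Matrix (Fin 2) (Fin 2) F)
  set N := Fintype.card (SpecialLinearGroup (Fin 2) F) with hN_def
  set q : ℝ := (Fintype.card F : ℝ) with hq_def
  have hq : 2 ≤ q := by
    rw [hq_def]; exact_mod_cast (Fintype.one_lt_card : 1 < Fintype.card F)
  have hN0 : 0 < q * (q - 1) * (q + 1) :=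
    mul_pos (mul_pos (by linarith) (by linarith)) (by linarith)
  have hN : (N : ℝ) = q * (q - 1) * (q + 1) := by
    rw [hN_def, card_specialLinearGroup_fin_two, Nat.cast_mul,
      Nat.cast_sub (Nat.one_le_pow _ _ Fintype.card_pos)]
    push_cast
    ring
  have hfiber : ∀ t : F, 1 / (q + 1) ≤ pushforward τ (fun _ => 1 / (N : ℝ)) t := fun t => by
    have hcard : q * (q - 1) ≤ (#(univ.filter fun g => τ g = t) : ℝ) := by
      have := card_trace_eq_ge t
      rw [← Nat.cast_le (α := ℝ), Nat.cast_mul, Nat.cast_sub Fintype.card_pos] at this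
      simpa using this
    rw [pushforward, sum_const, nsmul_eq_mul, hN, mul_one_div,
      div_le_div_iff₀ (by positivity) hN0]
    nlinarith
  have hsum : ∑ t : F, pushforward τ (fun _ => 1 / (N : ℝ)) t = ∑ _t : F, 1 / q := by
    rw [sum_pushforward, sum_const, sum_const, card_univ, card_univ, nsmul_eq_mul, nsmul_eq_mul,
      ← hq_def, hN]
    field_simp [(by linarith : q - 1 ≠ 0)]
  calc _ ≤ 2 * #(univ : Finset F) * (1 / q - 1 / (q + 1)) :=
        sum_abs_sub_le_of_sum_eq univ hsum
          (sub_nonneg.mpr (one_div_le_one_div_of_le (by linarith) (by linarith)))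
          fun t _ => by linarith [hfiber t]
    _ ≤ 2 / q := by
        rw [card_univ, ← hq_def]
        field_simp
        linarith

theorem sum_abs_pushforward_conj_sub_uniform_le [Fintype F] [DecidableEq F]
    {D : SpecialLinearGroup (Fin 2) F → ℝ} (hD : 0 ≤ D) :
    ∑ S ∈ univ.image (fun g : SpecialLinearGroup (Fin 2) F => univ.image fun u => u⁻¹ * g * u),
      |pushforward (fun g : SpecialLinearGroup (Fin 2) F => univ.image fun u => u⁻¹ * g * u) D S
        - pushforward (fun g : SpecialLinearGroup (Fin 2) F => univ.image fun u => u⁻¹ * g * u)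
          (fun _ => 1 / (Fintype.card (SpecialLinearGroup (Fin 2) F) : ℝ)) S|
      ≤ 2 * ∑ t : F, |pushforward (fun g : SpecialLinearGroup (Fin 2) F =>
          trace (g : Matrix (Fin 2) (Fin 2) F)) D t - 1 / (Fintype.card F : ℝ)|
        + 8 / Fintype.card F := by
  set τ := fun g : SpecialLinearGroup (Fin 2) F => trace (g : Matrix (Fin 2) (Fin 2) F)
  set U := fun _ : SpecialLinearGroup (Fin 2) F =>
    1 / (Fintype.card (SpecialLinearGroup (Fin 2) F) : ℝ)
  set p := 1 / (Fintype.card F : ℝ)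
  have hsq : ∀ t : F, t ∉ ({2, -2} : Finset F) → t ^ 2 ≠ 4 := fun t ht h4 => ht <| by
    have : t ^ 2 = 2 ^ 2 := by rw [h4]; norm_num
    simpa using sq_eq_sq_iff_eq_or_eq_neg.mp this
  have hclass := sum_abs_pushforward_sub_le (τ := τ)
    (fun a b h => trace_eq_of_isConj (image_conj_eq_image_conj_iff.mp h)) {2, -2}
    (fun a b ha h => image_conj_eq_image_conj_iff.mpr (isConj_of_trace_eq (hsq _ ha) h))
    hD (fun _ => by positivity : 0 ≤ U)
  have hsplit := sum_abs_sub_add_sum_add_le (univ.image τ) {2, -2} (pushforward τ D)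
    (pushforward τ U) p
  have huniform : ∑ t, |pushforward τ U t - p| ≤ 2 / Fintype.card F :=
    sum_abs_pushforward_trace_uniform_sub_le
  have hcard : (#({2, -2} : Finset F) : ℝ) * (2 * p) ≤ 2 * (2 * p) :=
    mul_le_mul_of_nonneg_right (by exact_mod_cast card_le_two) (by positivity)
  have h8 : 8 / (Fintype.card F : ℝ) = 8 * p := by ring
  have h2 : 2 / (Fintype.card F : ℝ) = 2 * p := by ring
  linarith

end Matrix.SpecialLinearGroup

open scoped Classical in
theorem stmt13 :
    ∃ c C : ℝ, 0 < c ∧ 0 < C ∧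
      ∀ (F : Type) [Field F] [Fintype F] [DecidableEq F],
        ∀ D : SpecialLinearGroup (Fin 2) F → ℝ,
          (∀ x, 0 ≤ D x) → (∑ x, D x) = 1 →
          ∀ ε : ℝ,
          -- the trace of a sample from D is ε-close to uniform on F_q
          ((1 : ℝ) / 2) * (∑ x : F,
              |(∑ g ∈ Finset.univ.filter
                  (fun g : SpecialLinearGroup (Fin 2) F =>
                    Matrix.trace (g : Matrix (Fin 2) (Fin 2) F) = x), D g) -
                1 / (Fintype.card F : ℝ)|) ≤ ε →
          -- then the conjugacy class of a sample from D is (Cε + C/q)-close to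
          -- the conjugacy class of a uniform sample
          ((1 : ℝ) / 2) * (∑ S ∈ Finset.univ.image
              (fun g : SpecialLinearGroup (Fin 2) F =>
                Finset.univ.image (fun u : SpecialLinearGroup (Fin 2) F => u⁻¹ * g * u)),
              |(∑ g ∈ Finset.univ.filter
                  (fun g : SpecialLinearGroup (Fin 2) F =>
                    Finset.univ.image
                      (fun u : SpecialLinearGroup (Fin 2) F => u⁻¹ * g * u) = S), D g) -
                (∑ g ∈ Finset.univ.filter
                  (fun g : SpecialLinearGroup (Fin 2) F =>
                    Finset.univ.image
                      (fun u : SpecialLinearGroup (Fin 2) F => u⁻¹ * g * u) = S),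
                  1 / (Fintype.card (SpecialLinearGroup (Fin 2) F) : ℝ))|) ≤
            C * ε + C / (Fintype.card F : ℝ) := by
  refine ⟨1, 4, one_pos, four_pos, fun F _ _ _ D hD _ ε hε => ?_⟩
  have hclass := mul_le_mul_of_nonneg_left
    (SpecialLinearGroup.sum_abs_pushforward_conj_sub_uniform_le hD) (by norm_num : (0 : ℝ) ≤ 1 / 2)
  simp only [pushforward] at hclass
  have hε0 : 0 ≤ ε := le_trans (by positivity) hε
  have h4 : 4 / (Fintype.card F : ℝ) = 1 / 2 * (8 / Fintype.card F) := by ring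
  linarith
end

section
/- There exist constants c > 0 and C > 0 such that the following holds for every prime power q. Let G = SL(2,q) and let v, w ∈ F_q. Suppose that either q is even, or q is odd and (v², w²) ≠ (−4, −4) and (v, w) ≠ (0, 0). Let D be the distribution of Tr( [[0,1],[1,w]] · u · [[v,1],[1,0]] · u^{-1} ) where u is uniform in G and the matrices are 2×2 matrices over F_q. Then (1) Pr[D = x] ≤ C/q for every x ∈ F_q, and (2) D is C·q^{-c}-close in statistical distance to the uniform distribution on F_q. -/
open Matrix Finset
open scoped MatrixGroups

/-!
For `B = !![v, 1; 1, 0]` (trace `v`, determinant `-1`) the map `u ↦ u B u⁻¹` sends `SL(2, q)` onto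
the set of all non-scalar matrices of trace `v` and determinant `-1`, with fibres of equal size,
as soon as `q` is even or the discriminant `v² + 4` of the characteristic polynomial is nonzero:
then `det [M ζ | ζ]` is a binary quadratic form that represents `1`, and `[M ζ | ζ]` conjugates the
companion matrix to `M`. So `D` is the law of `Tr (A M)` for `M` uniform in this class, which has
at least `q (q - 1)` elements. The matrices with `Tr (A M) = x` are points of an affine conic: at
most `2q` of them, and at most `q + 2` unless the conic contains a line, which happens for at most
four values of `x`. This gives `Pr[D = x] ≤ 4/q` and a statistical distance `O(1/q)` to uniform.
If `v² + 4 = 0`, the substitution `u ↦ u⁻¹` exchanges the roles of `v` and `w`.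
-/

section Quadratic

variable {F : Type*} [Field F]

theorem quadratic_coeffs_eq_zero_of_three_roots {a b c z₁ z₂ z₃ : F}
    (h₁₂ : z₁ ≠ z₂) (h₁₃ : z₁ ≠ z₃) (h₂₃ : z₂ ≠ z₃) (e₁ : a * z₁ ^ 2 + b * z₁ + c = 0)
    (e₂ : a * z₂ ^ 2 + b * z₂ + c = 0) (e₃ : a * z₃ ^ 2 + b * z₃ + c = 0) :
    a = 0 ∧ b = 0 ∧ c = 0 := by
  have d₁₂ : a * (z₁ + z₂) + b = 0 := by
    refine (mul_eq_zero.mp ?_).resolve_left (sub_ne_zero.mpr h₁₂)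
    linear_combination e₁ - e₂
  have d₁₃ : a * (z₁ + z₃) + b = 0 := by
    refine (mul_eq_zero.mp ?_).resolve_left (sub_ne_zero.mpr h₁₃)
    linear_combination e₁ - e₃
  have ha : a = 0 := by
    refine (mul_eq_zero.mp ?_).resolve_right (sub_ne_zero.mpr h₂₃)
    linear_combination d₁₂ - d₁₃
  refine ⟨ha, ?_, ?_⟩
  · linear_combination d₁₂ - (z₁ + z₂) * ha
  · linear_combination e₁ - z₁ * d₁₂ + z₁ * z₂ * ha

theorem quadratic_coeffs_eq_zero_of_two_lt_card {a b c : F} {s : Finset F} (hs : 2 < #s)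
    (h : ∀ z ∈ s, a * z ^ 2 + b * z + c = 0) : a = 0 ∧ b = 0 ∧ c = 0 := by
  obtain ⟨z₁, h₁, z₂, h₂, z₃, h₃, h₁₂, h₁₃, h₂₃⟩ := two_lt_card.mp hs
  exact quadratic_coeffs_eq_zero_of_three_roots h₁₂ h₁₃ h₂₃ (h z₁ h₁) (h z₂ h₂) (h z₃ h₃)

theorem card_le_two_of_quadratic_eq_zero {a b c : F} (ha : a ≠ 0) {s : Finset F}
    (h : ∀ z ∈ s, a * z ^ 2 + b * z + c = 0) : #s ≤ 2 :=
  not_lt.mp fun hs ↦ ha (quadratic_coeffs_eq_zero_of_two_lt_card hs h).1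

end Quadratic

section Conic

variable {F : Type*} [Field F] [Fintype F] [DecidableEq F]

theorem exists_line_with_three_points {Z : Finset (F × F)} (hZ : Fintype.card F + 2 < #Z) :
    (∃ z, 2 < #{p ∈ Z | p.2 = z}) ∨ ∃ e k, 2 < #{p ∈ Z | p.1 = e * p.2 + k} := by
  -- pigeonhole over the `q + 1` lines through a point `p₀` of `Z`
  obtain ⟨p₀, hp₀⟩ := card_pos.mp (by omega : 0 < #Z)
  let slope (p : F × F) : Option F :=
    if p.2 = p₀.2 then none else some ((p.1 - p₀.1) / (p.2 - p₀.2))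
  have hcard : #(univ : Finset (Option F)) * 1 < #(Z.erase p₀) := by
    rw [card_erase_of_mem hp₀, card_univ, Fintype.card_option]
    omega
  obtain ⟨l, -, hl⟩ :=
    exists_lt_card_fiber_of_mul_lt_card_of_maps_to (fun p _ ↦ mem_univ (slope p)) hcard
  have hp₀l : p₀ ∉ {p ∈ Z.erase p₀ | slope p = l} := by simp
  have three_le (T : Finset (F × F)) (hT : insert p₀ {p ∈ Z.erase p₀ | slope p = l} ⊆ T) :
      2 < #T := by
    have := card_le_card hT
    rw [card_insert_of_notMem hp₀l] at this
    omega
  cases l with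
  | none =>
    refine .inl ⟨p₀.2, three_le _ ?_⟩
    intro p hp
    rcases mem_insert.mp hp with rfl | hp
    · simp [hp₀]
    · simp only [mem_filter, mem_erase, slope] at hp ⊢
      exact ⟨hp.1.2, by split_ifs at hp with h <;> simp_all⟩
  | some e =>
    refine .inr ⟨e, p₀.1 - e * p₀.2, three_le _ ?_⟩
    intro p hp
    rcases mem_insert.mp hp with rfl | hp
    · simp [hp₀]
    · simp only [mem_filter, mem_erase, slope] at hp ⊢
      refine ⟨hp.1.2, ?_⟩
      split_ifs at hp with h
      · simp at hp
      · have : (p.1 - p₀.1) / (p.2 - p₀.2) = e := Option.some_injective _ hp.2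
        field_simp [sub_ne_zero.mpr h] at this
        linear_combination this

/-- `(y, z) = (M 1 0, M 1 1)` for the matrices `M` of trace `t` and determinant `d` with
`Tr (!![0, 1; 1, w] * M) = x`. -/
def traceConic (t d w x : F) : Finset (F × F) :=
  {p | p.1 ^ 2 + (w * p.2 - x) * p.1 - p.2 ^ 2 + t * p.2 - d = 0}

theorem card_filter_traceConic_snd_eq_le_two (t d w x z : F) :
    #{p ∈ traceConic t d w x | p.2 = z} ≤ 2 := by
  rw [← card_image_of_injOn (f := Prod.fst)]
  · refine card_le_two_of_quadratic_eq_zero one_ne_zero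
      (b := w * z - x) (c := -z ^ 2 + t * z - d) ?_
    simp only [mem_image, mem_filter, traceConic, mem_univ, true_and]
    rintro _ ⟨p, ⟨hp, rfl⟩, rfl⟩
    linear_combination hp
  · intro p hp p' hp' h
    simp only [coe_filter] at hp hp'
    exact Prod.ext h (hp.2.trans hp'.2.symm)

theorem card_traceConic_le (t d w x : F) : #(traceConic t d w x) ≤ 2 * Fintype.card F :=
  (card_le_mul_card_image _ 2 fun z _ ↦ card_filter_traceConic_snd_eq_le_two t d w x z).trans
    (Nat.mul_le_mul_left 2 (card_le_univ _))

/-- The values of `x` for which `traceConic t d w x` contains a line `y = e z + k`; the conditions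
on `(e, k)` come from comparing coefficients of the restriction of the conic to the line. -/
def exceptionalTraces (t d w : F) : Finset F :=
  image (fun p : F × F ↦ (2 * p.1 * p.2 + w * p.2 + t) / p.1)
    {p | p.1 ^ 2 + w * p.1 - 1 = 0 ∧ (p.1 + w) * p.2 ^ 2 + t * p.2 + d * p.1 = 0}

theorem card_exceptionalTraces_le (t d w : F) : #(exceptionalTraces t d w) ≤ 4 := by
  set S : Finset (F × F) :=
    {p | p.1 ^ 2 + w * p.1 - 1 = 0 ∧ (p.1 + w) * p.2 ^ 2 + t * p.2 + d * p.1 = 0}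
  have hfst : ∀ e ∈ S.image Prod.fst, e ^ 2 + w * e - 1 = 0 := by
    simp only [S, mem_image, mem_filter, mem_univ, true_and]
    rintro _ ⟨p, ⟨hp, -⟩, rfl⟩
    exact hp
  have hfiber : ∀ e ∈ S.image Prod.fst, #{p ∈ S | p.1 = e} ≤ 2 := by
    intro e he
    have hew : e + w ≠ 0 := fun h ↦ one_ne_zero (by linear_combination e * h - hfst e he)
    rw [← card_image_of_injOn (f := Prod.snd)]
    · refine card_le_two_of_quadratic_eq_zero hew (b := t) (c := d * e) ?_
      simp only [S, mem_image, mem_filter, mem_univ, true_and]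
      rintro _ ⟨p, ⟨⟨-, hp⟩, rfl⟩, rfl⟩
      exact hp
    · intro p hp p' hp' h
      simp only [coe_filter] at hp hp'
      exact Prod.ext (hp.2.trans hp'.2.symm) h
  have hS : #(S.image Prod.fst) ≤ 2 :=
    card_le_two_of_quadratic_eq_zero one_ne_zero (b := w) (c := -1) fun e he ↦ by
      linear_combination hfst e he
  calc #(exceptionalTraces t d w) ≤ #S := card_image_le
    _ ≤ 2 * #(S.image Prod.fst) := card_le_mul_card_image _ 2 hfiber
    _ ≤ 4 := by omega

theorem mem_exceptionalTraces_of_line {t d w x e k : F}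
    (h : 2 < #{p ∈ traceConic t d w x | p.1 = e * p.2 + k}) : x ∈ exceptionalTraces t d w := by
  rw [← card_image_of_injOn (f := Prod.snd)] at h
  · obtain ⟨hA, hB, hC⟩ := quadratic_coeffs_eq_zero_of_two_lt_card h
      (a := e ^ 2 + w * e - 1) (b := 2 * e * k + w * k - x * e + t) (c := k ^ 2 - x * k - d) (by
        simp only [traceConic, mem_image, mem_filter, mem_univ, true_and]
        rintro _ ⟨p, ⟨hp, hl⟩, rfl⟩
        rw [hl] at hp
        linear_combination hp)
    have he : e ≠ 0 := by rintro rfl; simp at hA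
    refine mem_image.mpr ⟨(e, k), ?_, ?_⟩
    · simp only [mem_filter, mem_univ, true_and]
      exact ⟨hA, by linear_combination k * hB - e * hC⟩
    · rw [div_eq_iff he]
      linear_combination hB
  · intro p hp p' hp' h
    simp only [coe_filter] at hp hp'
    exact Prod.ext (by rw [hp.2, hp'.2, h]) h

theorem card_traceConic_le_of_notMem {t d w x : F} (hx : x ∉ exceptionalTraces t d w) :
    #(traceConic t d w x) ≤ Fintype.card F + 2 := by
  by_contra! h
  rcases exists_line_with_three_points h with ⟨z, hz⟩ | ⟨e, k, hl⟩
  · exact absurd hz (card_filter_traceConic_snd_eq_le_two t d w x z).not_gt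
  · exact hx (mem_exceptionalTraces_of_line hl)

end Conic

section BinaryQuadraticForm

variable {F : Type*} [Field F] [Fintype F]

theorem exists_binary_quadratic_eq_one_of_ringChar_eq_two (h2 : ringChar F = 2) {a b c : F}
    (h : ¬(a = 0 ∧ b = 0 ∧ c = 0)) : ∃ y z, a * y ^ 2 + b * y * z + c * z ^ 2 = 1 := by
  by_cases ha : a = 0
  · by_cases hc : c = 0
    · have hb : b ≠ 0 := fun hb ↦ h ⟨ha, hb, hc⟩
      exact ⟨1, b⁻¹, by simp [ha, hc, hb]⟩
    · obtain ⟨r, hr⟩ := (FiniteField.isSquare_of_char_two h2 c⁻¹).exists_sq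
      exact ⟨0, r, by simp [ha, ← hr, hc]⟩
  · obtain ⟨r, hr⟩ := (FiniteField.isSquare_of_char_two h2 a⁻¹).exists_sq
    exact ⟨r, 0, by simp [← hr, ha]⟩

theorem exists_binary_quadratic_eq_one_of_discrim_ne_zero (hq : Fintype.card F % 2 = 1)
    {a b c : F} (hD : discrim a b c ≠ 0) : ∃ y z, a * y ^ 2 + b * y * z + c * z ^ 2 = 1 := by
  have h2 : (2 : F) ≠ 0 :=
    Ring.two_ne_zero fun h ↦ by rw [FiniteField.even_card_iff_char_two] at h; omega
  rw [discrim] at hD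
  by_cases ha : a = 0
  · have hb : b ≠ 0 := by rintro rfl; simp [ha] at hD
    exact ⟨(1 - c) / b, 1, by rw [ha]; field_simp; ring⟩
  -- `4a (a y² + b y z + c z²) = (2 a y + b z)² - (b² - 4ac) z²`, and `s² - D z² = 4a` is solvable.
  obtain ⟨s, z, hsz⟩ := FiniteField.exists_root_sum_quadratic
    (f := .C 1 * .X ^ 2 + .C 0 * .X + .C (-(4 * a)))
    (g := .C (-(b ^ 2 - 4 * a * c)) * .X ^ 2 + .C 0 * .X + .C 0)
    (Polynomial.degree_quadratic one_ne_zero) (Polynomial.degree_quadratic (neg_ne_zero.mpr hD)) hq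
  simp only [Polynomial.eval_add, Polynomial.eval_mul, Polynomial.eval_pow, Polynomial.eval_C,
    Polynomial.eval_X] at hsz
  refine ⟨(s - b * z) / (2 * a), z, ?_⟩
  field_simp
  linear_combination hsz

theorem exists_binary_quadratic_eq_one {a b c : F} (hF : ringChar F = 2 ∨ discrim a b c ≠ 0)
    (h : ¬(a = 0 ∧ b = 0 ∧ c = 0)) : ∃ y z, a * y ^ 2 + b * y * z + c * z ^ 2 = 1 := by
  by_cases h2 : ringChar F = 2
  · exact exists_binary_quadratic_eq_one_of_ringChar_eq_two h2 h
  · refine exists_binary_quadratic_eq_one_of_discrim_ne_zero ?_ (hF.resolve_left h2)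
    rw [FiniteField.even_card_iff_char_two] at h2
    omega

end BinaryQuadraticForm

abbrev conjMulAction (n R : Type*) [DecidableEq n] [Fintype n] [CommRing R] :
    MulAction (SpecialLinearGroup n R) (Matrix n n R) :=
  MulAction.compHom _ (ConjAct.toConjAct.toMonoidHom.comp SpecialLinearGroup.toGL)

attribute [local instance] conjMulAction

section Conjugation

variable {n R : Type*} [DecidableEq n] [Fintype n] [CommRing R]

theorem conj_smul_def (g : SpecialLinearGroup n R) (M : Matrix n n R) :
    g • M = (g : Matrix n n R) * M * ((g⁻¹ : SpecialLinearGroup n R) : Matrix n n R) :=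
  rfl

theorem coe_mul_coe_inv (g : SpecialLinearGroup n R) :
    (g : Matrix n n R) * ((g⁻¹ : SpecialLinearGroup n R) : Matrix n n R) = 1 := by
  rw [← Matrix.SpecialLinearGroup.coe_mul, mul_inv_cancel, Matrix.SpecialLinearGroup.coe_one]

theorem coe_inv_mul_coe (g : SpecialLinearGroup n R) :
    ((g⁻¹ : SpecialLinearGroup n R) : Matrix n n R) * (g : Matrix n n R) = 1 := by
  rw [← Matrix.SpecialLinearGroup.coe_mul, inv_mul_cancel, Matrix.SpecialLinearGroup.coe_one]

theorem conj_smul_eq_iff {g : SpecialLinearGroup n R} {M N : Matrix n n R} :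
    g • M = N ↔ g * M = N * g := by
  rw [conj_smul_def]
  constructor
  · rintro rfl
    rw [mul_assoc _ _ (g : Matrix n n R), coe_inv_mul_coe, mul_one]
  · intro h
    rw [h, mul_assoc, coe_mul_coe_inv, mul_one]

theorem conj_smul_scalar (g : SpecialLinearGroup n R) (c : R) : g • scalar n c = scalar n c :=
  conj_smul_eq_iff.mpr (scalar_commute c (fun _ ↦ .all _ _) _).symm.eq

theorem trace_conj_smul (g : SpecialLinearGroup n R) (M : Matrix n n R) :
    (g • M).trace = M.trace := by
  rw [conj_smul_def, trace_mul_cycle, coe_inv_mul_coe, one_mul]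

theorem det_conj_smul (g : SpecialLinearGroup n R) (M : Matrix n n R) : (g • M).det = M.det := by
  rw [conj_smul_def, det_mul, det_mul, Matrix.SpecialLinearGroup.det_coe,
    Matrix.SpecialLinearGroup.det_coe, one_mul, mul_one]

end Conjugation

theorem trace_fin_two_of_mul {R : Type*} [CommRing R] (a b : R) (M : Matrix (Fin 2) (Fin 2) R) :
    (!![a, 1; 1, b] * M).trace = a * M 0 0 + M 1 0 + M 0 1 + b * M 1 1 := by
  simp only [trace_fin_two, mul_apply, Fin.sum_univ_two, of_apply, cons_val', cons_val_zero,
    cons_val_one, empty_val', cons_val_fin_one]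
  ring

section NonscalarClass

variable {F : Type*} [Field F] [Fintype F] [DecidableEq F]

def nonscalarClass (t d : F) : Finset (Matrix (Fin 2) (Fin 2) F) :=
  {M | M.trace = t ∧ M.det = d ∧ ∀ c, M ≠ scalar (Fin 2) c}

theorem smul_mem_nonscalarClass {t d : F} (g : SL(2, F)) {M : Matrix (Fin 2) (Fin 2) F}
    (hM : M ∈ nonscalarClass t d) : g • M ∈ nonscalarClass t d := by
  simp only [nonscalarClass, mem_filter, mem_univ, true_and, trace_conj_smul, det_conj_smul] at *
  refine ⟨hM.1, hM.2.1, fun c hc ↦ hM.2.2 c ?_⟩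
  rw [← inv_smul_smul g M, hc, conj_smul_scalar]

theorem exists_smul_companion_eq {t d : F} (hF : ringChar F = 2 ∨ discrim 1 (-t) d ≠ 0)
    {M : Matrix (Fin 2) (Fin 2) F} (hM : M ∈ nonscalarClass t d) :
    ∃ g : SL(2, F), g • !![t, 1; -d, 0] = M := by
  simp only [nonscalarClass, mem_filter, mem_univ, true_and, trace_fin_two, det_fin_two] at hM
  obtain ⟨htr, hdet, hM⟩ := hM
  have hD : discrim (-M 1 0) (M 0 0 - M 1 1) (M 0 1) = discrim 1 (-t) d := by
    simp only [discrim]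
    linear_combination (M 0 0 + M 1 1 + t) * htr - 4 * hdet
  have hns : ¬(-M 1 0 = 0 ∧ M 0 0 - M 1 1 = 0 ∧ M 0 1 = 0) := by
    rintro ⟨h10, h, h01⟩
    refine hM (M 0 0) (ext fun i j ↦ ?_)
    fin_cases i <;> fin_cases j <;> simp [neg_eq_zero.mp h10, h01, sub_eq_zero.mp h]
  -- `det [M ζ | ζ]` is a binary quadratic form in `ζ` of discriminant `t² - 4d`
  obtain ⟨y, z, hyz⟩ := exists_binary_quadratic_eq_one (hD ▸ hF) hns
  let g : SL(2, F) := ⟨!![M 0 0 * y + M 0 1 * z, y; M 1 0 * y + M 1 1 * z, z], by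
    rw [det_fin_two_of]; linear_combination hyz⟩
  refine ⟨g, conj_smul_eq_iff.mpr ?_⟩
  ext i j
  fin_cases i <;> fin_cases j <;> simp [g, mul_apply, Fin.sum_univ_two]
  · linear_combination y * hdet - (M 0 0 * y + M 0 1 * z) * htr
  · linear_combination z * hdet - (M 1 0 * y + M 1 1 * z) * htr

theorem exists_smul_eq_of_mem_nonscalarClass {t d : F}
    (hF : ringChar F = 2 ∨ discrim 1 (-t) d ≠ 0) {B M : Matrix (Fin 2) (Fin 2) F}
    (hB : B ∈ nonscalarClass t d) (hM : M ∈ nonscalarClass t d) :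
    ∃ g : SL(2, F), g • B = M := by
  obtain ⟨g, rfl⟩ := exists_smul_companion_eq hF hM
  obtain ⟨h, rfl⟩ := exists_smul_companion_eq hF hB
  exact ⟨g * h⁻¹, by rw [mul_smul, inv_smul_smul]⟩

theorem mul_sub_one_le_card_nonscalarClass (t d : F) :
    (Fintype.card F : ℝ) * (Fintype.card F - 1) ≤ #(nonscalarClass t d) := by
  have h1 : 1 ≤ Fintype.card F := Fintype.card_pos
  suffices Fintype.card F * (Fintype.card F - 1) ≤ #(nonscalarClass t d) by exact_mod_cast this
  calc Fintype.card F * (Fintype.card F - 1)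
      = #((univ : Finset F) ×ˢ (univ : Finset F).erase 0) := by
        rw [card_product, card_erase_of_mem (mem_univ 0), card_univ]
    _ ≤ #(nonscalarClass t d) := by
        refine card_le_card_of_injOn (fun p ↦ !![t - p.1, p.2; ((t - p.1) * p.1 - d) / p.2, p.1])
          (fun p hp ↦ ?_) (fun p _ p' _ h ↦ ?_)
        · have hp2 : p.2 ≠ 0 := (mem_erase.mp (mem_product.mp hp).2).1
          simp only [nonscalarClass, coe_filter, mem_univ, true_and, Set.mem_ofPred_eq,
            trace_fin_two_of, det_fin_two_of]
          refine ⟨by ring, by field_simp; ring, fun c hc ↦ hp2 ?_⟩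
          simpa using congrFun (congrFun hc 0) 1
        · have h11 := congrFun (congrFun h 1) 1
          have h01 := congrFun (congrFun h 0) 1
          simp only [of_apply, cons_val', cons_val_zero, cons_val_one, empty_val',
            cons_val_fin_one] at h11 h01
          exact Prod.ext h11 h01

theorem symm_fin_two_mem_nonscalarClass (a b : F) :
    !![a, 1; 1, b] ∈ nonscalarClass (a + b) (a * b - 1) := by
  simp only [nonscalarClass, mem_filter, mem_univ, trace_fin_two_of, det_fin_two_of, mul_one,
    true_and]
  intro c hc
  simpa using congrFun (congrFun hc 0) 1

theorem card_filter_trace_mul_le_card_traceConic (t d a b x : F) :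
    #{M ∈ nonscalarClass t d | (!![a, 1; 1, b] * M).trace = x} ≤
      #(traceConic t d (b - a) (x - a * t)) := by
  refine card_le_card_of_injOn (fun M ↦ (M 1 0, M 1 1)) (fun M hM ↦ ?_) (fun M hM M' hM' h ↦ ?_)
  all_goals simp only [nonscalarClass, traceConic, coe_filter, mem_filter, mem_univ, true_and,
      Set.mem_ofPred_eq, trace_fin_two_of_mul] at *
  all_goals simp only [trace_fin_two, det_fin_two] at *
  · obtain ⟨⟨htr, hdet, -⟩, hx⟩ := hM
    linear_combination hdet + M 1 0 * hx - (M 1 1 + a * M 1 0) * htr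
  · obtain ⟨⟨htr, -, -⟩, hx⟩ := hM
    obtain ⟨⟨htr', -, -⟩, hx'⟩ := hM'
    obtain ⟨h10, h11⟩ := Prod.ext_iff.mp h
    have h00 : M 0 0 = M' 0 0 := by linear_combination htr - htr' - h11
    have h01 : M 0 1 = M' 0 1 := by linear_combination hx - hx' - a * h00 - h10 - b * h11
    ext i j
    fin_cases i <;> fin_cases j <;> assumption

end NonscalarClass

section OrbitFibers

variable {G X : Type*} [Group G] [Fintype G] [MulAction G X] [DecidableEq X]

theorem card_filter_smul_eq_eq_card_stabilizer {b x : X} (hx : ∃ g : G, g • b = x) :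
    #{g : G | g • b = x} = #{g : G | g • b = b} := by
  obtain ⟨h, rfl⟩ := hx
  exact card_equiv (Equiv.mulLeft h⁻¹) fun g ↦ by simp [mul_smul, inv_smul_eq_iff]

theorem card_filter_smul_mul_card_orbit {b : X} {s : Finset X}
    (hs : ∀ x, x ∈ s ↔ ∃ g : G, g • b = x) (P : X → Prop) [DecidablePred P] :
    #{g : G | P (g • b)} * #s = #{x ∈ s | P x} * Fintype.card G := by
  have hcount : ∀ t ⊆ s, #{g : G | g • b ∈ t} = #t * #{g : G | g • b = b} := by
    intro t ht
    rw [card_eq_sum_card_fiberwise (s := {g : G | g • b ∈ t}) (f := (· • b)) (t := t)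
      fun g hg ↦ (mem_filter.mp hg).2,
      sum_const_nat fun x hx ↦ ?_]
    rw [filter_filter, ← card_filter_smul_eq_eq_card_stabilizer ((hs x).mp (ht hx))]
    congr 1
    ext g
    simp only [mem_filter, mem_univ, true_and, and_iff_right_iff_imp]
    rintro rfl
    exact hx
  have hP : #{g : G | P (g • b)} = #{g : G | g • b ∈ s.filter P} := by
    congr 1
    ext g
    simp [hs]
  have hG : Fintype.card G = #{g : G | g • b ∈ s} := by
    rw [← card_univ]
    congr 1
    ext g
    simp [hs]
  rw [hP, hG, hcount _ (filter_subset _ _), hcount _ subset_rfl]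
  ring

end OrbitFibers

theorem sum_abs_sub_inv_card_le {ι : Type*} [Fintype ι] [DecidableEq ι] {p : ι → ℝ}
    (hp : ∑ i, p i = 1) (S : Finset ι) {α β : ℝ} (hα : 0 ≤ α) (hβ : 0 ≤ β) (hS : ∀ i ∈ S, p i ≤ α)
    (hSc : ∀ i ∉ S, p i ≤ 1 / Fintype.card ι + β) :
    ∑ i, |p i - 1 / Fintype.card ι| ≤ 2 * (#S * α + Fintype.card ι * β) := by
  set N : ℝ := (Fintype.card ι : ℝ)
  have hN : N ≠ 0 := by
    rintro hN
    simp [N, Fintype.card_eq_zero_iff] at hN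
    simp [Finset.univ_eq_empty] at hp
  -- `|y| = 2 max y 0 - y`, and the deviations `p i - 1/N` sum to zero
  have habs (y : ℝ) : |y| = 2 * max y 0 - y := by
    linarith [max_zero_add_max_neg_zero_eq_abs_self y, max_zero_sub_max_neg_zero_eq_self y]
  have hsum : ∑ i, (p i - 1 / N) = 0 := by
    rw [sum_sub_distrib, hp, sum_const, card_univ, nsmul_eq_mul, mul_one_div_cancel hN, sub_self]
  have hpos : ∀ i, max (p i - 1 / N) 0 ≤ if i ∈ S then α else β := by
    intro i
    have : 0 ≤ 1 / N := by positivity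
    split_ifs with hi
    · exact max_le (by linarith [hS i hi]) hα
    · exact max_le (by linarith [hSc i hi]) hβ
  calc ∑ i, |p i - 1 / N| = 2 * ∑ i, max (p i - 1 / N) 0 := by
        rw [sum_congr rfl fun i _ ↦ habs _, sum_sub_distrib, hsum, sub_zero, mul_sum]
    _ ≤ 2 * ∑ i, if i ∈ S then α else β :=
        mul_le_mul_of_nonneg_left (sum_le_sum fun i _ ↦ hpos i) zero_le_two
    _ ≤ 2 * (#S * α + N * β) := by
        rw [sum_ite, sum_const, sum_const, nsmul_eq_mul, nsmul_eq_mul, filter_mem_eq_inter,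
          univ_inter]
        have : (#{i | i ∉ S} : ℝ) ≤ N := Nat.cast_le.mpr (card_le_univ _)
        gcongr

section TraceDistribution

variable {F : Type*} [Field F] [Fintype F] [DecidableEq F]

noncomputable def traceConjProb (A B : Matrix (Fin 2) (Fin 2) F) (x : F) : ℝ :=
  #{u : SL(2, F) | (A * (u : Matrix (Fin 2) (Fin 2) F) * B *
    ((u⁻¹ : SL(2, F)) : Matrix (Fin 2) (Fin 2) F)).trace = x} / Fintype.card SL(2, F)

theorem sum_traceConjProb (A B : Matrix (Fin 2) (Fin 2) F) : ∑ x, traceConjProb A B x = 1 := by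
  simp only [traceConjProb, ← sum_div]
  rw [← Nat.cast_sum, ← card_eq_sum_card_fiberwise fun _ _ ↦ mem_univ _, card_univ,
    div_self (by exact_mod_cast Fintype.card_ne_zero)]

theorem traceConjProb_comm (A B : Matrix (Fin 2) (Fin 2) F) :
    traceConjProb A B = traceConjProb B A := by
  funext x
  rw [traceConjProb, traceConjProb, card_equiv (Equiv.inv SL(2, F)) fun u ↦ ?_]
  simp only [mem_filter, mem_univ, true_and, Equiv.inv_apply, inv_inv]
  rw [mul_assoc (B * _) A, trace_mul_comm (B * _), ← mul_assoc]

theorem traceConjProb_eq_div {t d : F} (hF : ringChar F = 2 ∨ discrim 1 (-t) d ≠ 0)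
    {B : Matrix (Fin 2) (Fin 2) F} (hB : B ∈ nonscalarClass t d) (A : Matrix (Fin 2) (Fin 2) F)
    (x : F) :
    traceConjProb A B x =
      #{M ∈ nonscalarClass t d | (A * M).trace = x} / #(nonscalarClass t d) := by
  have hs (M : Matrix (Fin 2) (Fin 2) F) : M ∈ nonscalarClass t d ↔ ∃ g : SL(2, F), g • B = M :=
    ⟨exists_smul_eq_of_mem_nonscalarClass hF hB, fun ⟨g, hg⟩ ↦ hg ▸ smul_mem_nonscalarClass g hB⟩
  have key := card_filter_smul_mul_card_orbit hs (fun M ↦ (A * M).trace = x)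
  have hconj (u : SL(2, F)) : A * (u : Matrix (Fin 2) (Fin 2) F) * B *
      ((u⁻¹ : SL(2, F)) : Matrix (Fin 2) (Fin 2) F) = A * (u • B) := by
    simp only [conj_smul_def, mul_assoc]
  have hG : (0 : ℝ) < Fintype.card SL(2, F) := by exact_mod_cast Fintype.card_pos
  have hC : (0 : ℝ) < #(nonscalarClass t d) := by exact_mod_cast card_pos.mpr ⟨B, hB⟩
  rw [traceConjProb, div_eq_div_iff hG.ne' hC.ne']
  simp_rw [hconj]
  exact_mod_cast key

theorem traceConjProb_le {t d : F} (hF : ringChar F = 2 ∨ discrim 1 (-t) d ≠ 0)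
    {B : Matrix (Fin 2) (Fin 2) F} (hB : B ∈ nonscalarClass t d) (a b x : F) :
    traceConjProb !![a, 1; 1, b] B x ≤ 4 / Fintype.card F := by
  have hq : (2 : ℝ) ≤ Fintype.card F := by exact_mod_cast Fintype.one_lt_card
  have hC := mul_sub_one_le_card_nonscalarClass (F := F) t d
  have hL : (#{M ∈ nonscalarClass t d | (!![a, 1; 1, b] * M).trace = x} : ℝ) ≤
      2 * Fintype.card F := by
    exact_mod_cast (card_filter_trace_mul_le_card_traceConic t d a b x).trans
      (card_traceConic_le _ _ _ _)
  rw [traceConjProb_eq_div hF hB, div_le_div_iff₀ (by nlinarith) (by positivity)]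
  nlinarith

theorem traceConjProb_le_of_notMem {t d : F} (hF : ringChar F = 2 ∨ discrim 1 (-t) d ≠ 0)
    {B : Matrix (Fin 2) (Fin 2) F} (hB : B ∈ nonscalarClass t d) {a b x : F}
    (hx : x - a * t ∉ exceptionalTraces t d (b - a)) :
    traceConjProb !![a, 1; 1, b] B x ≤ 1 / Fintype.card F + 6 / Fintype.card F ^ 2 := by
  have hq : (2 : ℝ) ≤ Fintype.card F := by exact_mod_cast Fintype.one_lt_card
  have hC := mul_sub_one_le_card_nonscalarClass (F := F) t d
  have hL : (#{M ∈ nonscalarClass t d | (!![a, 1; 1, b] * M).trace = x} : ℝ) ≤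
      Fintype.card F + 2 := by
    exact_mod_cast (card_filter_trace_mul_le_card_traceConic t d a b x).trans
      (card_traceConic_le_of_notMem hx)
  rw [traceConjProb_eq_div hF hB, div_add_div _ _ (by positivity) (by positivity),
    div_le_div_iff₀ (by nlinarith) (by positivity)]
  have hq' : (0 : ℝ) ≤ Fintype.card F ^ 2 + 6 * Fintype.card F := by positivity
  nlinarith [mul_le_mul_of_nonneg_left hC hq',
    mul_le_mul_of_nonneg_right hL (by positivity : (0 : ℝ) ≤ Fintype.card F ^ 3)]

theorem sum_abs_traceConjProb_sub_le {t d : F} (hF : ringChar F = 2 ∨ discrim 1 (-t) d ≠ 0)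
    {B : Matrix (Fin 2) (Fin 2) F} (hB : B ∈ nonscalarClass t d) (a b : F) :
    ∑ x, |traceConjProb !![a, 1; 1, b] B x - 1 / Fintype.card F| ≤ 44 / Fintype.card F := by
  have hq : (0 : ℝ) < Fintype.card F := by exact_mod_cast Fintype.card_pos
  set S := (exceptionalTraces t d (b - a)).image (· + a * t)
  have hS : (#S : ℝ) ≤ 4 := by exact_mod_cast card_image_le.trans (card_exceptionalTraces_le ..)
  refine (sum_abs_sub_inv_card_le (sum_traceConjProb _ _) S (by positivity) (by positivity)
    (fun x _ ↦ traceConjProb_le hF hB a b x) fun x hx ↦ traceConjProb_le_of_notMem hF hB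
      fun h ↦ hx (mem_image.mpr ⟨_, h, sub_add_cancel x _⟩)).trans ?_
  calc _ ≤ 2 * (4 * (4 / (Fintype.card F : ℝ)) + Fintype.card F * (6 / Fintype.card F ^ 2)) := by
        gcongr
    _ = 44 / (Fintype.card F : ℝ) := by field_simp; ring

end TraceDistribution

open scoped Classical in
theorem stmt14 :
    ∃ c C : ℝ, 0 < c ∧ 0 < C ∧
      ∀ (F : Type) [Field F] [Fintype F] [DecidableEq F],
        ∀ v w : F,
          (Even (Fintype.card F) ∨
            (¬ Even (Fintype.card F) ∧ ¬ (v ^ 2 = -4 ∧ w ^ 2 = -4) ∧ ¬ (v = 0 ∧ w = 0))) →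
          letI q : ℝ := (Fintype.card F : ℝ)
          letI n : ℝ := (Fintype.card (SpecialLinearGroup (Fin 2) F) : ℝ)
          ((∀ x : F,
            ((Finset.univ.filter (fun u : SpecialLinearGroup (Fin 2) F =>
                Matrix.trace (!![(0 : F), 1; 1, w] * (u : Matrix (Fin 2) (Fin 2) F) *
                  !![v, 1; 1, 0] * ((u⁻¹ : SpecialLinearGroup (Fin 2) F) :
                    Matrix (Fin 2) (Fin 2) F)) = x)).card : ℝ) / n ≤ C / q) ∧
          ((1 : ℝ) / 2) * (∑ x : F,
              |((Finset.univ.filter (fun u : SpecialLinearGroup (Fin 2) F =>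
                  Matrix.trace (!![(0 : F), 1; 1, w] * (u : Matrix (Fin 2) (Fin 2) F) *
                    !![v, 1; 1, 0] * ((u⁻¹ : SpecialLinearGroup (Fin 2) F) :
                      Matrix (Fin 2) (Fin 2) F)) = x)).card : ℝ) / n - 1 / q|) ≤
            C * q ^ (-c)) := by
  refine ⟨1, 22, one_pos, by norm_num, ?_⟩
  intro F _ _ _ v w hvw
  obtain ⟨t, a, b, B, hF, hB, hswap⟩ : ∃ t a b B, (ringChar F = 2 ∨ discrim 1 (-t) (-1) ≠ 0) ∧
      B ∈ nonscalarClass t (-1) ∧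
      traceConjProb !![0, 1; 1, w] !![v, 1; 1, 0] = traceConjProb !![a, 1; 1, b] B := by
    by_cases hv : ringChar F = 2 ∨ discrim 1 (-v) (-1) ≠ 0
    · exact ⟨v, 0, w, _, hv, by simpa using symm_fin_two_mem_nonscalarClass v (0 : F), rfl⟩
    have hw : discrim 1 (-w) (-1) ≠ 0 := by
      push Not at hv
      rcases hvw with heven | ⟨-, hsq, -⟩
      · exact absurd (FiniteField.even_card_iff_char_two.mpr (Nat.even_iff.mp heven)) hv.1
      · unfold discrim at hv ⊢
        exact fun hw ↦ hsq ⟨by linear_combination hv.2, by linear_combination hw⟩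
    exact ⟨w, v, 0, _, .inr hw, by simpa using symm_fin_two_mem_nonscalarClass (0 : F) w,
      traceConjProb_comm _ _⟩
  show (∀ x, traceConjProb !![0, 1; 1, w] !![v, 1; 1, 0] x ≤ _) ∧
    1 / 2 * ∑ x, |traceConjProb !![0, 1; 1, w] !![v, 1; 1, 0] x - _| ≤ _
  rw [hswap, Real.rpow_neg_one]
  refine ⟨fun x ↦ (traceConjProb_le hF hB a b x).trans (by gcongr; norm_num), ?_⟩
  calc _ ≤ 1 / 2 * (44 / Fintype.card F : ℝ) :=
        mul_le_mul_of_nonneg_left (sum_abs_traceConjProb_sub_le hF hB a b) (by norm_num)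
    _ = 22 * (Fintype.card F : ℝ)⁻¹ := by ring
end

section
/- Let G be a finite group and let k be a positive integer. Let u_1^0, u_1^1, u_2^0, u_2^1, …, u_k^0, u_k^1 be chosen uniformly and independently at random from G, and for ε ∈ {0,1}^k let s(ε) = u_1^{ε_1} u_2^{ε_2} ⋯ u_k^{ε_k}. Then for any two distinct ε, η ∈ {0,1}^k, the pair (s(ε), s(η)) is uniformly distributed on G², i.e. for every (g,h) ∈ G², Pr[s(ε) = g and s(η) = h] = 1/|G|². -/
/-!
Pick `j` with `ε j ≠ η j`. Multiplying the entry `u_j^{ε_j}` on the left by the conjugate of `a`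
by the prefix of `s(ε)` before position `j` turns `s(ε)` into `a * s(ε)`, and likewise for
`u_j^{η_j}`, `b` and `s(η)`. Since the prefixes do not involve position `j`, this is an action
of `G × G` on the tuples `u` for which `u ↦ (s(ε), s(η))` is equivariant with respect to left
multiplication; hence all its fibres have the same size `|G|^{2k} / |G|^2`.
-/

open Finset

theorem List.ofFn_update {α : Type*} {n : ℕ} (f : Fin n → α) (j : Fin n) (a : α) :
    List.ofFn (Function.update f j a) = (List.ofFn f).set j a := by
  apply List.ext_getElem (by simp)
  intro i _ _
  simp only [List.getElem_ofFn, List.getElem_set, Function.update_apply, Fin.ext_iff]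
  grind

section EquivariantFibres

variable {α H : Type*} [Group H] [MulAction H α] [Fintype α] [Fintype H] [DecidableEq H]
  (f : α → H) (hf : ∀ (c : H) (x : α), f (c • x) = c * f x)
include hf

theorem card_mul_card_filter_eq_card_of_map_smul (b : H) :
    Fintype.card H * #{x | f x = b} = Fintype.card α := by
  have fibre_eq (c : H) : #{x | f x = c} = #{x | f x = b} := by
    refine card_nbij' ((b * c⁻¹) • ·) ((c * b⁻¹) • ·) ?_ ?_ ?_ ?_ <;> intro x hx <;>
      simp_all [smul_smul]
  calc Fintype.card H * #{x | f x = b} = ∑ c : H, #{x | f x = c} := by simp [fibre_eq]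
    _ = Fintype.card α := (card_eq_sum_card_fiberwise fun x _ => mem_univ (f x)).symm

theorem card_filter_div_card_eq_of_map_smul [Nonempty α] (b : H) :
    (#{x | f x = b} : ℝ) / Fintype.card α = 1 / Fintype.card H := by
  have hcard := card_mul_card_filter_eq_card_of_map_smul f hf b
  have hfibre : #{x | f x = b} ≠ 0 := by
    rintro hzero
    rw [hzero, mul_zero] at hcard
    exact Fintype.card_ne_zero hcard.symm
  rw [← hcard]
  field_simp
  push_cast
  ring

end EquivariantFibres

namespace SelectProd

variable {G : Type*} {k : ℕ}

lemma ofFn_update_apply (σ : Fin k → Bool) (j : Fin k) (u : Fin k → Bool → G) (v : Bool → G) :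
    (List.ofFn fun i => Function.update u j v i (σ i)) =
      (List.ofFn fun i => u i (σ i)).set j (v (σ j)) := by
  rw [← List.ofFn_update]
  congr 1
  ext i
  exact Function.apply_update (fun i (w : Bool → G) => w (σ i)) u j v i

variable [Group G]

def selectProd (σ : Fin k → Bool) (u : Fin k → Bool → G) : G :=
  (List.ofFn fun i => u i (σ i)).prod

def prefixProd (σ : Fin k → Bool) (j : Fin k) (u : Fin k → Bool → G) : G :=
  ((List.ofFn fun i => u i (σ i)).take j).prod

def suffixProd (σ : Fin k → Bool) (j : Fin k) (u : Fin k → Bool → G) : G :=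
  ((List.ofFn fun i => u i (σ i)).drop (j + 1)).prod

section Update

variable (σ : Fin k → Bool) (j : Fin k) (u : Fin k → Bool → G) (v : Bool → G)

lemma selectProd_update :
    selectProd σ (Function.update u j v) = prefixProd σ j u * v (σ j) * suffixProd σ j u := by
  simp [selectProd, prefixProd, suffixProd, ofFn_update_apply, List.prod_set]

lemma selectProd_eq : selectProd σ u = prefixProd σ j u * u j (σ j) * suffixProd σ j u := by
  rw [← selectProd_update, Function.update_eq_self]

lemma prefixProd_update : prefixProd σ j (Function.update u j v) = prefixProd σ j u := by
  simp [prefixProd, ofFn_update_apply, List.take_set_of_le]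

end Update

variable (ε η : Fin k → Bool) (j : Fin k)

def shift (c : G × G) (u : Fin k → Bool → G) : Fin k → Bool → G :=
  Function.update u j fun x =>
    if x = ε j then (prefixProd ε j u)⁻¹ * c.1 * prefixProd ε j u * u j x
    else (prefixProd η j u)⁻¹ * c.2 * prefixProd η j u * u j x

lemma shift_one (u : Fin k → Bool → G) : shift ε η j 1 u = u := by
  simp [shift]

lemma shift_mul (c d : G × G) (u : Fin k → Bool → G) :
    shift ε η j (c * d) u = shift ε η j c (shift ε η j d u) := by
  simp only [shift, prefixProd_update, Function.update_idem, Function.update_self]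
  congr 1
  ext x
  split_ifs <;> simp [mul_assoc]

abbrev shiftAction : MulAction (G × G) (Fin k → Bool → G) where
  smul := shift ε η j
  one_smul := shift_one ε η j
  mul_smul := shift_mul ε η j

lemma selectProd_shift_left (c : G × G) (u : Fin k → Bool → G) :
    selectProd ε (shift ε η j c u) = c.1 * selectProd ε u := by
  simp [shift, selectProd_update, selectProd_eq ε j u, mul_assoc]

lemma selectProd_shift_right (hj : ε j ≠ η j) (c : G × G) (u : Fin k → Bool → G) :
    selectProd η (shift ε η j c u) = c.2 * selectProd η u := by
  simp [shift, selectProd_update, selectProd_eq η j u, mul_assoc, hj.symm]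

end SelectProd

open SelectProd in
open scoped Classical in
theorem stmt16_general {G : Type*} [Group G] [Fintype G]
    (k : ℕ) (ε η : Fin k → Bool) (hεη : ε ≠ η) (g h : G) :
    ((Finset.univ.filter (fun u : Fin k → Bool → G =>
        (List.ofFn fun i : Fin k => u i (ε i)).prod = g ∧
        (List.ofFn fun i : Fin k => u i (η i)).prod = h)).card : ℝ) /
      (Fintype.card (Fin k → Bool → G) : ℝ) =
      1 / (Fintype.card G : ℝ) ^ 2 := by
  obtain ⟨j, hj⟩ := Function.ne_iff.mp hεη
  let := shiftAction ε η j (G := G)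
  have key := card_filter_div_card_eq_of_map_smul (fun u => (selectProd ε u, selectProd η u))
    (fun c u => Prod.ext (selectProd_shift_left ε η j c u) (selectProd_shift_right ε η j hj c u))
    (g, h)
  simpa [selectProd, Fintype.card_prod, sq] using key

open scoped Classical in
theorem stmt16 {G : Type*} [Group G] [Fintype G]
    (k : ℕ) (hk : 0 < k) (ε η : Fin k → Bool) (hεη : ε ≠ η) (g h : G) :
    ((Finset.univ.filter (fun u : Fin k → Bool → G =>
        (List.ofFn fun i : Fin k => u i (ε i)).prod = g ∧
        (List.ofFn fun i : Fin k => u i (η i)).prod = h)).card : ℝ) /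
      (Fintype.card (Fin k → Bool → G) : ℝ) =
      1 / (Fintype.card G : ℝ) ^ 2 :=
  stmt16_general k ε η hεη g h
end
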